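/- arXiv:2205.01882 — 10 statements merged into one kernel-verified Lean document; each statement's English description precedes it below -/
import Mathlib

section
/- Let C be a bounded subset of ℝ^k and let Δ(C) denote the set of Borel probability measures on C. Then the convex hull of C equals the set of barycenters {∫ x dm(x) : m ∈ Δ(C)}. -/
/-!
The barycenter `b` of a probability measure carried by a convex set `s` in finite dimension
lies in the closure of `s`, hence in its affine span. If `b ∉ s`, a functional `g` properly
separates `b` from `s`; since `g ≤ g b` on `s` and `g` has mean `g b`, the measure is carried by
`s ∩ {g = g b}`, whose affine span has smaller dimension, and induction puts `b` in that slice.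
-/

open MeasureTheory Set Module Pointwise

theorem finrank_direction_affineSpan_inter_lt {K E : Type*} [Field K] [AddCommGroup E]
    [Module K E] [FiniteDimensional K E] {s : Set E} {f : E →ₗ[K] K} {c : K}
    (hne : (s ∩ {y | f y = c}).Nonempty) {x : E} (hx : x ∈ s) (hfx : f x ≠ c) :
    finrank K (affineSpan K (s ∩ {y | f y = c})).direction <
      finrank K (affineSpan K s).direction := by
  have hlevel : affineSpan K (s ∩ {y | f y = c}) ≤
      (affineSpan K {c}).comap f.toAffineMap := by
    refine affineSpan_le.mpr fun y hy => ?_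
    simpa [AffineSubspace.mem_affineSpan_singleton] using hy.2
  have hx' : x ∉ affineSpan K (s ∩ {y | f y = c}) := fun h => by
    simpa [AffineSubspace.mem_affineSpan_singleton, hfx] using hlevel h
  have hlt : affineSpan K (s ∩ {y | f y = c}) < affineSpan K s :=
    lt_of_le_of_ne (affineSpan_mono K inter_subset_left)
      fun h => hx' (h ▸ subset_affineSpan K s hx)
  exact Submodule.finrank_lt_finrank_of_lt
    (AffineSubspace.direction_lt_of_nonempty hlt ((affineSpan_nonempty (k := K)).mpr hne))

variable {E : Type*} [NormedAddCommGroup E] [NormedSpace ℝ E] [FiniteDimensional ℝ E]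

theorem Convex.exists_le_lt_of_mem_affineSpan_of_notMem {s : Set E} (hs : Convex ℝ s) {b : E}
    (hbA : b ∈ affineSpan ℝ s) (hb : b ∉ s) :
    ∃ f : E →L[ℝ] ℝ, (∀ x ∈ s, f x ≤ f b) ∧ ∃ x ∈ s, f x < f b := by
  obtain ⟨x₀, hx₀⟩ : s.Nonempty := by
    by_contra h
    simp [not_nonempty_iff_eq_empty.mp h, AffineSubspace.notMem_bot] at hbA
  obtain ⟨V, hV⟩ := Submodule.exists_isCompl (affineSpan ℝ s).direction
  -- Thickening `s` by a complement of its direction gives a convex body avoiding `b`.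
  set t := s + (V : Set E)
  have ht : Convex ℝ t := hs.add V.convex
  have hbt : b ∉ t := by
    rintro ⟨x, hx, v, hv, rfl⟩
    have hvA : v ∈ (affineSpan ℝ s).direction := by
      simpa using AffineSubspace.vsub_mem_direction hbA (subset_affineSpan ℝ s hx)
    have hv0 : v = 0 := (Submodule.disjoint_def.mp hV.disjoint) v hvA hv
    exact hb (by simpa [hv0] using hx)
  have hst : s ⊆ t := fun x hx => by simpa using add_mem_add hx V.zero_mem
  have hspan : affineSpan ℝ t = ⊤ := by
    have hne : (affineSpan ℝ t : Set E).Nonempty := ⟨x₀, subset_affineSpan ℝ t (hst hx₀)⟩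
    rw [← AffineSubspace.direction_eq_top_iff_of_nonempty hne, eq_top_iff, ← hV.sup_eq_top]
    refine sup_le (AffineSubspace.direction_le (affineSpan_mono ℝ hst)) fun v hv => ?_
    simpa using AffineSubspace.vsub_mem_direction
      (subset_affineSpan ℝ t (add_mem_add hx₀ hv)) (subset_affineSpan ℝ t (hst hx₀))
  have hint : (interior t).Nonempty := by
    rw [← ht.convexHull_eq]
    exact interior_convexHull_nonempty_iff_affineSpan_eq_top.mpr hspan
  obtain ⟨f, hf⟩ := geometric_hahn_banach_open_point ht.interior isOpen_interior
    fun h => hbt (interior_subset h)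
  have hle : ∀ x ∈ t, f x ≤ f b := by
    have : closure (interior t) ⊆ {x | f x ≤ f b} :=
      closure_minimal (fun x hx => (hf x hx).le) (isClosed_le f.continuous continuous_const)
    rw [ht.closure_interior_eq_closure_of_nonempty_interior hint] at this
    exact fun x hx => this (subset_closure hx)
  have hfV : ∀ v ∈ V, f v = 0 := by
    intro v hv
    by_contra hfv
    -- otherwise `f` would be unbounded above on `x₀ + V ⊆ t`
    have := hle _ (add_mem_add hx₀ (V.smul_mem ((f b - f x₀ + 1) / f v) hv))
    rw [map_add, map_smul, smul_eq_mul, div_mul_cancel₀ _ hfv] at this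
    linarith
  obtain ⟨a, ha⟩ := hint
  obtain ⟨x, hx, v, hv, rfl⟩ := interior_subset ha
  refine ⟨f, fun x hx => hle x (hst hx), x, hx, ?_⟩
  simpa [hfV v hv] using hf _ ha

theorem Convex.integral_mem_of_finiteDimensional {α : Type*} [MeasurableSpace α]
    {μ : Measure α} [IsProbabilityMeasure μ] {s : Set E} (hs : Convex ℝ s) {f : α → E}
    (hfs : ∀ᵐ a ∂μ, f a ∈ s) (hfi : Integrable f μ) : ∫ a, f a ∂μ ∈ s := by
  induction hn : finrank ℝ (affineSpan ℝ s).direction using Nat.strong_induction_on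
    generalizing s with
  | _ n ih =>
  set b := ∫ a, f a ∂μ
  by_contra hb
  have hbA : b ∈ affineSpan ℝ s :=
    closure_minimal (subset_affineSpan ℝ s) (affineSpan ℝ s).closed_of_finiteDimensional
      (hs.closure.integral_mem isClosed_closure (hfs.mono fun _ h => subset_closure h) hfi)
  obtain ⟨g, hg, x, hx, hgx⟩ := hs.exists_le_lt_of_mem_affineSpan_of_notMem hbA hb
  have hfg : ∀ᵐ a ∂μ, g (f a) = g b := by
    have hmean : ∫ a, g (f a) ∂μ = ∫ _, g b ∂μ := by
      simp [b, g.integral_comp_comm hfi]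
    exact (integral_eq_iff_of_ae_le (g.integrable_comp hfi) (integrable_const _)
      (hfs.mono fun a ha => hg _ ha)).mp hmean
  have hfs' : ∀ᵐ a ∂μ, f a ∈ s ∩ {y | g y = g b} := hfs.and hfg
  obtain ⟨a, ha⟩ := hfs'.exists
  have hlt := finrank_direction_affineSpan_inter_lt (f := (g : E →ₗ[ℝ] ℝ)) ⟨f a, ha⟩ hx hgx.ne
  exact hb (ih _ (hn ▸ hlt) (hs.inter (convex_hyperplane g.isLinear _)) hfs' rfl).1

theorem integral_sum_ofReal_smul_dirac {α F ι : Type*} [MeasurableSpace α]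
    [MeasurableSingletonClass α] [NormedAddCommGroup F] [NormedSpace ℝ F] [CompleteSpace F]
    [Fintype ι] {w : ι → ℝ} (hw : ∀ i, 0 ≤ w i) (z : ι → α) (g : α → F) :
    ∫ x, g x ∂(∑ i, ENNReal.ofReal (w i) • Measure.dirac (z i)) = ∑ i, w i • g (z i) := by
  rw [integral_finsetSum_measure fun i _ =>
    (integrable_dirac enorm_lt_top).smul_measure ENNReal.ofReal_ne_top]
  simp [integral_smul_measure, integral_dirac, ENNReal.toReal_ofReal (hw _)]

theorem exists_isProbabilityMeasure_integral_eq_of_mem_convexHull {F : Type*}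
    [NormedAddCommGroup F] [NormedSpace ℝ F] [CompleteSpace F] [MeasurableSpace F]
    [MeasurableSingletonClass F] {s : Set F} {b : F} (hb : b ∈ convexHull ℝ s) :
    ∃ μ : Measure F, IsProbabilityMeasure μ ∧ μ sᶜ = 0 ∧ b = ∫ x, x ∂μ := by
  obtain ⟨ι, _, w, z, hw₀, hw₁, hz, rfl⟩ := mem_convexHull_iff_exists_fintype.mp hb
  refine ⟨∑ i, ENNReal.ofReal (w i) • Measure.dirac (z i), ⟨?_⟩, ?_,
    (integral_sum_ofReal_smul_dirac hw₀ z id).symm⟩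
  · simp [← ENNReal.ofReal_sum_of_nonneg fun i _ => hw₀ i, hw₁]
  · simp [hz]

/-- The convex hull of a bounded set `C ⊆ ℝ^k` equals the set of barycenters of Borel
probability measures supported on `C`. -/
theorem convexHull_eq_barycenters (k : ℕ) (C : Set (EuclideanSpace ℝ (Fin k)))
    (hC : Bornology.IsBounded C) :
    convexHull ℝ C =
      {b : EuclideanSpace ℝ (Fin k) |
        ∃ m : Measure (EuclideanSpace ℝ (Fin k)),
          IsProbabilityMeasure m ∧ m Cᶜ = 0 ∧ b = ∫ x, x ∂m} := by
  ext b
  refine ⟨exists_isProbabilityMeasure_integral_eq_of_mem_convexHull, ?_⟩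
  rintro ⟨m, hm, hmC, rfl⟩
  have hC_ae : ∀ᵐ x ∂m, x ∈ C := ae_iff.mpr hmC
  obtain ⟨R, hR⟩ := isBounded_iff_forall_norm_le.mp hC
  have hint : Integrable (fun x => x) m :=
    Integrable.of_bound aestronglyMeasurable_id R (hC_ae.mono hR)
  exact (convex_convexHull ℝ C).integral_mem_of_finiteDimensional
    (hC_ae.mono fun x hx => subset_convexHull ℝ C hx) hint
end

section
/- Let X be a finite set and π a strict ranking (bijection X → {1,…,|X|}). Let p: X → ℝ^K. There exists β ∈ ℝ^K with β·p(x) > β·p(y) whenever π(x) > π(y) if and only if the following holds: whenever λ_1,…,λ_{|X|-1} ≥ 0 satisfy λ_1 p(π^{-1}(|X|)) + Σ_{i=2}^{|X|-1} (λ_i − λ_{i−1}) p(π^{-1}(|X|+1−i)) − λ_{|X|-1} p(π^{-1}(1)) = 0, then all λ_i = 0. -/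
/-!
Let `q i` be the feature vector of the alternative ranked `i`-th from the top. Summation by
parts turns the left-hand side of Condition (*) into `∑ λᵢ • (q i - q (i + 1))`, while `β`
represents the ranking iff `β ⬝ᵥ (q i - q (i + 1)) > 0` for every pair of consecutive
alternatives. The equivalence is then Gordan's theorem of the alternative for the vectors
`q i - q (i + 1)`, which follows by separating `0` from their convex hull.
-/

open Finset

theorem exists_smul_sum_eq_of_mem_convexHull_image {R E ι : Type*} [Field R] [LinearOrder R]
    [IsStrictOrderedRing R] [AddCommGroup E] [Module R E] {s : Finset ι} {v : ι → E} {x : E}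
    (hx : x ∈ convexHull R (v '' s)) :
    ∃ w : ι → R, (∀ i ∈ s, 0 ≤ w i) ∧ ∑ i ∈ s, w i = 1 ∧ ∑ i ∈ s, w i • v i = x := by
  classical
  suffices convexHull R (v '' s) ⊆
      {y | ∃ w : ι → R, (∀ i ∈ s, 0 ≤ w i) ∧ ∑ i ∈ s, w i = 1 ∧ ∑ i ∈ s, w i • v i = y} from
    this hx
  refine convexHull_min ?_ ?_
  · rintro _ ⟨i, hi, rfl⟩
    rw [mem_coe] at hi
    refine ⟨fun j => if j = i then 1 else 0, fun j _ => by positivity, ?_, ?_⟩ <;>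
      simp [ite_smul, hi]
  · rintro _ ⟨w, hw₀, hw₁, rfl⟩ _ ⟨w', hw₀', hw₁', rfl⟩ a b ha hb hab
    refine ⟨a • w + b • w', fun i hi => ?_, ?_, ?_⟩
    · simp only [Pi.add_apply, Pi.smul_apply, smul_eq_mul]
      have := hw₀ i hi; have := hw₀' i hi; positivity
    · simp [sum_add_distrib, ← mul_sum, hw₁, hw₁', hab]
    · simp [add_smul, mul_smul, sum_add_distrib, ← smul_sum]

/-- Gordan's theorem of the alternative. -/
theorem exists_strongDual_pos_iff {ι E : Type*} [AddCommGroup E] [Module ℝ E]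
    [TopologicalSpace E] [IsTopologicalAddGroup E] [ContinuousSMul ℝ E] [LocallyConvexSpace ℝ E]
    [T2Space E]
    (s : Finset ι) (v : ι → E) :
    (∃ f : StrongDual ℝ E, ∀ i ∈ s, 0 < f (v i)) ↔
      ∀ lam : ι → ℝ, (∀ i ∈ s, 0 ≤ lam i) → ∑ i ∈ s, lam i • v i = 0 → ∀ i ∈ s, lam i = 0 := by
  constructor
  · rintro ⟨f, hf⟩ lam hlam hsum
    have hterms : ∑ i ∈ s, lam i * f (v i) = 0 := by
      simpa [map_sum, map_smul] using congr_arg f hsum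
    intro i hi
    have := (sum_eq_zero_iff_of_nonneg fun j hj => mul_nonneg (hlam j hj) (hf j hj).le).1
      hterms i hi
    exact (mul_eq_zero.1 this).resolve_right (hf i hi).ne'
  · intro h
    have h₀ : (0 : E) ∉ convexHull ℝ (v '' s) := by
      intro h₀
      obtain ⟨w, hw₀, hw₁, hw⟩ := exists_smul_sum_eq_of_mem_convexHull_image h₀
      rw [sum_eq_zero (h w hw₀ hw)] at hw₁
      exact zero_ne_one hw₁
    obtain ⟨f, u, hfu, hu⟩ := geometric_hahn_banach_point_closed (convex_convexHull ℝ _)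
      ((s.finite_toSet.image v).isCompact_convexHull ℝ).isClosed h₀
    refine ⟨f, fun i hi => ?_⟩
    rw [map_zero] at hfu
    exact hfu.trans (hu _ (subset_convexHull ℝ _ ⟨i, hi, rfl⟩))

theorem exists_dotProduct_pos_iff {ι K : Type*} [Fintype K] (s : Finset ι)
    (v : ι → K → ℝ) :
    (∃ β : K → ℝ, ∀ i ∈ s, 0 < β ⬝ᵥ v i) ↔
      ∀ lam : ι → ℝ, (∀ i ∈ s, 0 ≤ lam i) → ∑ i ∈ s, lam i • v i = 0 → ∀ i ∈ s, lam i = 0 := by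
  classical
  rw [← exists_strongDual_pos_iff]
  constructor
  · rintro ⟨β, hβ⟩
    exact ⟨LinearMap.toContinuousLinearMap (dotProductEquiv ℝ K β), hβ⟩
  · rintro ⟨f, hf⟩
    refine ⟨(dotProductEquiv ℝ K).symm f.toLinearMap, fun i hi => ?_⟩
    have := LinearMap.congr_fun ((dotProductEquiv ℝ K).apply_symm_apply f.toLinearMap) (v i)
    simp only [dotProductEquiv_apply_apply] at this
    rw [this]
    exact hf i hi

theorem sum_Icc_smul_sub_succ {R M : Type*} [Ring R] [AddCommGroup M] [Module R M]
    (lam : ℕ → R) (q : ℕ → M) {m : ℕ} (hm : 1 ≤ m) :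
    ∑ i ∈ Icc 1 m, lam i • (q i - q (i + 1)) =
      lam 1 • q 1 + ∑ i ∈ Icc 2 m, (lam i - lam (i - 1)) • q i - lam m • q (m + 1) := by
  induction m, hm using Nat.le_induction with
  | base => simp [smul_sub]
  | succ m hm ih =>
    rw [sum_Icc_succ_top (by omega), ih, sum_Icc_succ_top (by omega), Nat.add_sub_cancel]
    simp only [smul_sub, sub_smul]
    abel

theorem strictMono_iff_forall_Icc_lt_sub_mod {α : Type*} [Preorder α] {n : ℕ} (hn : 0 < n)
    {g : Fin n → α} :
    StrictMono g ↔ ∀ i ∈ Icc 1 (n - 1),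
      g ⟨(n - (i + 1)) % n, Nat.mod_lt _ hn⟩ < g ⟨(n - i) % n, Nat.mod_lt _ hn⟩ := by
  obtain ⟨m, rfl⟩ := Nat.exists_eq_add_one_of_ne_zero hn.ne'
  rw [Fin.strictMono_iff_lt_succ]
  constructor
  · intro h i hi
    obtain ⟨hi₁, hi₂⟩ := mem_Icc.1 hi
    convert h ⟨m - i, by omega⟩ using 2 <;> ext <;> simp [Nat.mod_eq_of_lt, hi₁]
    omega
  · intro h j
    convert h (m - j) (mem_Icc.2 ⟨by omega, by omega⟩) using 2 <;> ext <;>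
      simp [Nat.mod_eq_of_lt, add_comm 1, j.is_lt]
    omega

theorem exists_strictMono_dotProduct_iff {n K : ℕ} (hn : 0 < n) (P : Fin n → Fin K → ℝ) :
    (∃ β : Fin K → ℝ, StrictMono fun k => β ⬝ᵥ P k) ↔
    ∀ lam : ℕ → ℝ, (∀ i ∈ Icc 1 (n - 1), 0 ≤ lam i) →
      lam 1 • P ⟨n - 1, Nat.sub_lt hn one_pos⟩
        + (∑ i ∈ Icc 2 (n - 1), (lam i - lam (i - 1)) • P ⟨(n - i) % n, Nat.mod_lt _ hn⟩)
        - lam (n - 1) • P ⟨0, hn⟩ = 0 →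
      ∀ i ∈ Icc 1 (n - 1), lam i = 0 := by
  set q : ℕ → Fin K → ℝ := fun i => P ⟨(n - i) % n, Nat.mod_lt _ hn⟩
  have hq_top : P ⟨n - 1, Nat.sub_lt hn one_pos⟩ = q 1 := by
    simp only [q, Nat.mod_eq_of_lt (Nat.sub_lt hn one_pos)]
  have hq_bot : P ⟨0, hn⟩ = q (n - 1 + 1) := by
    simp only [q, Nat.sub_add_cancel hn, Nat.sub_self, Nat.zero_mod]
  have hmono : ∀ β : Fin K → ℝ, (StrictMono fun k => β ⬝ᵥ P k) ↔
      ∀ i ∈ Icc 1 (n - 1), 0 < β ⬝ᵥ (q i - q (i + 1)) := by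
    intro β
    simp only [dotProduct_sub, sub_pos]
    exact strictMono_iff_forall_Icc_lt_sub_mod hn
  simp only [hmono, hq_top, hq_bot, exists_dotProduct_pos_iff]
  refine forall_congr' fun lam => imp_congr_right fun _ => ?_
  rcases Nat.eq_zero_or_pos (n - 1) with h | h
  · simp [h]
  · rw [sum_Icc_smul_sub_succ lam q h]

/-- A ranking `π` is linearly representable over the features `p` iff the only nonnegative
solution `λ` of the stated linear system is the trivial one (Condition (*)). -/
theorem representable_iff_condition_star {X : Type*} [Fintype X] [Nonempty X] {K : ℕ}
    (π : X ≃ Fin (Fintype.card X)) (p : X → Fin K → ℝ) :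
    (∃ β : Fin K → ℝ, ∀ x y : X, π y < π x →
        (∑ i, β i * p y i) < (∑ i, β i * p x i)) ↔
    (∀ lam : ℕ → ℝ, (∀ i ∈ Finset.Icc 1 (Fintype.card X - 1), 0 ≤ lam i) →
      lam 1 • p (π.symm ⟨Fintype.card X - 1, Nat.sub_lt Fintype.card_pos one_pos⟩)
        + (∑ i ∈ Finset.Icc 2 (Fintype.card X - 1),
            (lam i - lam (i - 1)) •
              p (π.symm ⟨(Fintype.card X - i) % Fintype.card X,
                  Nat.mod_lt _ Fintype.card_pos⟩))
        - lam (Fintype.card X - 1) • p (π.symm ⟨0, Fintype.card_pos⟩) = 0 →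
      ∀ i ∈ Finset.Icc 1 (Fintype.card X - 1), lam i = 0) := by
  rw [← exists_strictMono_dotProduct_iff Fintype.card_pos (fun k => p (π.symm k))]
  refine exists_congr fun β => ⟨fun h a b hab => ?_, fun h x y hxy => ?_⟩
  · simpa [dotProduct] using h (π.symm b) (π.symm a) (by simpa using hab)
  · simpa [dotProduct] using h hxy
end

section
/- Let P be a polytope in ℝ^N given as the convex hull of a finite set V of vertices, and let Q ⊆ rint(P) be a subset of the relative interior of P. Then rint(P) ⊆ co(Q) if and only if every vertex v ∈ V lies in the closure of Q. -/
/-!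
If every vertex is a limit of points of `Q`, then `P ⊆ closure (co Q)`; since `co Q ⊆ P` is
convex and dense in `P`, it contains `rint P` (push a point of `rint P` slightly away from a point
of `rint (co Q)` and use that open segments from the closure to the relative interior stay in the
relative interior). Conversely, `rint P` is dense in `P`, so each vertex `v` lies in
`closure (co Q)`; if `v` were at distance `ε` from `Q`, the exposing functional `l` would be
bounded on `Q` (a subset of the compact set `P \ ball v ε`) by some `m < l v`, hence on
`closure (co Q)`, which is absurd at `v`.
-/

open Set Metric Filter Topology

variable {E : Type*} [NormedAddCommGroup E] [NormedSpace ℝ E]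

theorem mem_intrinsicInterior_iff_mem_nhdsWithin {s : Set E} {x : E} :
    x ∈ intrinsicInterior ℝ s ↔
      x ∈ affineSpan ℝ s ∧ s ∈ 𝓝[affineSpan ℝ s] x := by
  constructor
  · rintro ⟨y, hy, rfl⟩
    exact ⟨y.2, preimage_coe_mem_nhds_subtype.1 (mem_interior_iff_mem_nhds.1 hy)⟩
  · rintro ⟨hx, hs⟩
    exact ⟨⟨x, hx⟩, mem_interior_iff_mem_nhds.2 (preimage_coe_mem_nhds_subtype.2 hs), rfl⟩

theorem Convex.combo_closure_intrinsicInterior_mem_intrinsicInterior [FiniteDimensional ℝ E]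
    {s : Set E} (hs : Convex ℝ s) {x y : E} (hx : x ∈ closure s)
    (hy : y ∈ intrinsicInterior ℝ s) {a b : ℝ} (ha : 0 ≤ a) (hb : 0 < b) (hab : a + b = 1) :
    a • x + b • y ∈ intrinsicInterior ℝ s := by
  set A := affineSpan ℝ s
  rw [mem_intrinsicInterior_iff_mem_nhdsWithin] at hy ⊢
  obtain ⟨hyA, ε, hε, hball⟩ := hy.imp_right Metric.mem_nhdsWithin_iff.1
  have hxA : x ∈ A :=
    A.closed_of_finiteDimensional.closure_subset_iff.2 (subset_affineSpan ℝ s) hx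
  obtain ⟨x', hx's, hxx'⟩ := Metric.mem_closure_iff.1 hx (b * ε / 2) (by positivity)
  have hwA : a • x + b • y ∈ A := by
    simpa only [AffineMap.lineMap_apply_module, show 1 - b = a by linarith] using
      AffineMap.lineMap_mem b hxA hyA
  refine ⟨hwA, Metric.mem_nhdsWithin_iff.2 ⟨b * ε / 2, by positivity, ?_⟩⟩
  rintro z ⟨hzw, hzA⟩
  -- `z = a • x' + b • y'`, where `y'` is within `ε` of `y` because `x'` is close to `x`.
  set y' := AffineMap.lineMap x' z b⁻¹
  have hy'A : y' ∈ A := AffineMap.lineMap_mem _ (subset_affineSpan ℝ s hx's) hzA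
  have hy'y : dist y' y < ε := by
    have hdiff : y' - y = b⁻¹ • ((z - (a • x + b • y)) + a • (x - x')) := by
      simp only [y', AffineMap.lineMap_apply_module, show a = 1 - b by linarith]
      match_scalars <;> field_simp <;> ring
    rw [dist_eq_norm, hdiff, norm_smul, Real.norm_of_nonneg (inv_nonneg.2 hb.le),
      inv_mul_lt_iff₀ hb]
    rw [dist_eq_norm] at hxx'
    rw [mem_ball, dist_eq_norm] at hzw
    calc ‖z - (a • x + b • y) + a • (x - x')‖
        ≤ ‖z - (a • x + b • y)‖ + a * ‖x - x'‖ := by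
          grw [norm_add_le, norm_smul, Real.norm_of_nonneg ha]
      _ < b * ε / 2 + b * ε / 2 :=
          add_lt_add_of_lt_of_le hzw
            ((mul_le_of_le_one_left (norm_nonneg _) (by linarith)).trans hxx'.le)
      _ = b * ε := by ring
  have hz : z = a • x' + b • y' := by
    simp only [y', AffineMap.lineMap_apply_module, show a = 1 - b by linarith, smul_add,
      smul_smul, mul_sub, mul_inv_cancel₀ hb.ne']
    module
  rw [hz]
  exact hs hx's (hball ⟨hy'y, hy'A⟩) ha hb.le hab

theorem Convex.openSegment_closure_intrinsicInterior_subset_intrinsicInterior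
    [FiniteDimensional ℝ E] {s : Set E} (hs : Convex ℝ s) {x y : E} (hx : x ∈ closure s)
    (hy : y ∈ intrinsicInterior ℝ s) : openSegment ℝ x y ⊆ intrinsicInterior ℝ s := by
  rintro _ ⟨a, b, ha, hb, hab, rfl⟩
  exact hs.combo_closure_intrinsicInterior_mem_intrinsicInterior hx hy ha.le hb hab

theorem Convex.closure_intrinsicInterior [FiniteDimensional ℝ E] {s : Set E} (hs : Convex ℝ s) :
    closure (intrinsicInterior ℝ s) = closure s := by
  refine (closure_mono intrinsicInterior_subset).antisymm fun x hx => ?_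
  obtain ⟨y, hy⟩ := (closure_nonempty_iff.1 ⟨x, hx⟩).intrinsicInterior hs
  exact closure_mono (hs.openSegment_closure_intrinsicInterior_subset_intrinsicInterior hx hy)
    (segment_subset_closure_openSegment (left_mem_segment ℝ x y))

theorem Convex.intrinsicInterior_subset_of_subset_closure [FiniteDimensional ℝ E] {C s : Set E}
    (hC : Convex ℝ C) (hCs : C ⊆ s) (hsC : s ⊆ closure C) :
    intrinsicInterior ℝ s ⊆ C := by
  intro x hx
  obtain ⟨y, hy⟩ :=
    (closure_nonempty_iff.1 ⟨x, hsC (intrinsicInterior_subset hx)⟩).intrinsicInterior hC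
  rw [mem_intrinsicInterior_iff_mem_nhdsWithin] at hx
  -- Going from `y` through `x` slightly past `x` stays in `s`, at a point of `closure C`.
  have hyA : y ∈ affineSpan ℝ s := subset_affineSpan ℝ s (hCs (intrinsicInterior_subset hy))
  have hline : Tendsto (AffineMap.lineMap y x) (𝓝[>] (1 : ℝ)) (𝓝[affineSpan ℝ s] x) :=
    tendsto_nhdsWithin_iff.2
      ⟨(AffineMap.lineMap_continuous.tendsto' 1 x (by simp)).mono_left nhdsWithin_le_nhds,
        Eventually.of_forall fun t => AffineMap.lineMap_mem t hyA hx.1⟩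
  obtain ⟨t, hzs, ht⟩ := ((hline.eventually hx.2).and self_mem_nhdsWithin).exists
  have hxz : x ∈ openSegment ℝ (AffineMap.lineMap y x t) y := by
    rw [openSegment_symm, openSegment_eq_image_lineMap]
    refine ⟨t⁻¹, ⟨by positivity, inv_lt_one_of_one_lt₀ ht⟩, ?_⟩
    rw [AffineMap.lineMap_lineMap_right, inv_mul_cancel₀ (by positivity),
      AffineMap.lineMap_apply_one]
  exact intrinsicInterior_subset
    (hC.openSegment_closure_intrinsicInterior_subset_intrinsicInterior (hsC hzs) hy hxz)

theorem mem_closure_of_mem_closure_convexHull_of_exposed {P Q : Set E} (hP : IsCompact P)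
    (hQP : Q ⊆ P) {v : E} {l : E →L[ℝ] ℝ} (hl : ∀ w ∈ P, w ≠ v → l w < l v)
    (hv : v ∈ closure (convexHull ℝ Q)) : v ∈ closure Q := by
  by_contra hvQ
  obtain ⟨ε, hε, hfar⟩ : ∃ ε > 0, ∀ q ∈ Q, ε ≤ dist v q := by
    simpa [Metric.mem_closure_iff] using hvQ
  set K := P ∩ {w | ε ≤ dist v w}
  have hK : IsCompact K :=
    hP.inter_right (isClosed_le continuous_const (continuous_const.dist continuous_id))
  obtain ⟨m, hmv, hKm⟩ : ∃ m < l v, ∀ w ∈ K, l w ≤ m :=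
    hK.exists_forall_le' (α := ℝᵒᵈ) l.continuous.continuousOn fun w hw =>
      hl w hw.1 (by rintro rfl; exact hε.not_ge (by simpa using hw.2))
  have hQm : closure (convexHull ℝ Q) ⊆ {w | l w ≤ m} :=
    closure_minimal (convexHull_min (fun q hq => hKm q ⟨hQP hq, hfar q hq⟩)
      (convex_halfSpace_le l.isLinear m)) (isClosed_le l.continuous continuous_const)
  exact (hQm hv).not_gt hmv

/-- Let `P = co V` be a polytope whose vertices (the points of `V`) are exposed points,
and let `Q` be a subset of the relative interior of `P`. Then `rint P ⊆ co Q` iff every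
vertex of `P` lies in the closure of `Q`. -/
theorem rint_subset_convexHull_iff_vertices_in_closure {N : ℕ}
    (V : Finset (EuclideanSpace ℝ (Fin N)))
    (hV : ∀ v ∈ V, ∃ l : EuclideanSpace ℝ (Fin N) →L[ℝ] ℝ,
      ∀ w ∈ convexHull ℝ (V : Set (EuclideanSpace ℝ (Fin N))), w ≠ v → l w < l v)
    (Q : Set (EuclideanSpace ℝ (Fin N)))
    (hQ : Q ⊆ intrinsicInterior ℝ (convexHull ℝ (V : Set (EuclideanSpace ℝ (Fin N))))) :
    intrinsicInterior ℝ (convexHull ℝ (V : Set (EuclideanSpace ℝ (Fin N)))) ⊆ convexHull ℝ Q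
      ↔ ∀ v ∈ V, v ∈ closure Q := by
  have hPconv := convex_convexHull ℝ (V : Set (EuclideanSpace ℝ (Fin N)))
  have hQP := hQ.trans intrinsicInterior_subset
  constructor
  · intro h v hv
    obtain ⟨l, hl⟩ := hV v hv
    refine mem_closure_of_mem_closure_convexHull_of_exposed
      (V.finite_toSet.isCompact_convexHull (𝕜 := ℝ)) hQP hl (closure_mono h ?_)
    rw [hPconv.closure_intrinsicInterior]
    exact subset_closure (subset_convexHull ℝ _ hv)
  · intro h
    exact (convex_convexHull ℝ Q).intrinsicInterior_subset_of_subset_closure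
      (convexHull_min hQP hPconv)
      (convexHull_min (fun v hv => closure_mono (subset_convexHull ℝ Q) (h v hv))
        (convex_convexHull ℝ Q).closure)
end

section
/- Let X be a finite set, 𝒟 a collection of nonempty subsets of X. For each strict ranking π of X define ρ^π ∈ ℝ^{𝒟×X} by ρ^π(D,x) = 1 if x ∈ D and π(x) > π(y) for all y ∈ D \ {x}, and 0 otherwise. Then the affine hull of {ρ^π : π ranking of X} equals {q ∈ ℝ^{𝒟×X} : Σ_{x∈D} q(D,x) = 1 for all D ∈ 𝒟, and q(D,x) = 0 whenever x ∉ D}. Consequently, the dimension of the convex hull of {ρ^π} equals Σ_{D∈𝒟}(|D|−1). -/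
/-- The deterministic choice vector associated with a ranking `π` of `X`:
`rhoVec 𝒟 π (D, x) = 1` iff `x ∈ D` is the `π`-best element of `D`. -/
def rhoVec {X : Type*} [Fintype X] [DecidableEq X] (𝒟 : Finset (Finset X)) {m : ℕ}
    (π : X ≃ Fin m) : ({D : Finset X // D ∈ 𝒟} × X) → ℝ :=
  fun q => if q.2 ∈ q.1.1 ∧ ∀ y ∈ q.1.1, y ≠ q.2 → π y < π q.2 then 1 else 0

/-!
The adding-up and zero constraints say that `q` lies in the fibre over `(1, 0)` of a linear map
`constraintMap`, and every `ρ^π` satisfies them. So it suffices to show that the differences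
`ρ^π - ρ^σ` span the kernel, which is spanned by the vectors `e_{D,x} - e_{D,y}` with `x, y ∈ D`. Rank the complement of a set `T` first, then `x`, then `y`, then the rest of `T`:
exchanging `x` and `y` changes the best element exactly of the menus `D ⊆ T` containing both, so
the two choice vectors differ by `∑_{x, y ∈ D ⊆ T} (e_{D,x} - e_{D,y})`. With `T = D`, strong
induction on `D` isolates `e_{D,x} - e_{D,y}`. Since every menu is nonempty, `constraintMap` is
onto, and rank–nullity gives the dimension.
-/

open Finset Function

section TierRanking

variable {X : Type*} [Fintype X]

noncomputable def rankingOfKey {α : Type*} [LinearOrder α] (g : X → α) (hg : Injective g) :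
    X ≃ Fin (Fintype.card X) :=
  letI := LinearOrder.lift' g hg
  (Fintype.orderIsoFinOfCardEq X rfl).symm.toEquiv

theorem rankingOfKey_lt_rankingOfKey_iff {α : Type*} [LinearOrder α] {g : X → α}
    (hg : Injective g) {a b : X} :
    rankingOfKey g hg a < rankingOfKey g hg b ↔ g a < g b :=
  letI := LinearOrder.lift' g hg
  (Fintype.orderIsoFinOfCardEq X rfl).symm.lt_iff_lt

variable [DecidableEq X] (T : Finset X) (x y : X)

def tier (w : X) : ℕ :=
  if w ∉ T then 3 else if w = x then 2 else if w = y then 1 else 0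

noncomputable def tierKey (w : X) : ℕ ×ₗ Fin (Fintype.card X) :=
  toLex (tier T x y w, Fintype.equivFin X w)

theorem tierKey_injective : Injective (tierKey T x y) := fun _ _ h =>
  (Fintype.equivFin X).injective (congrArg (fun p => (ofLex p).2) h)

noncomputable def tierRanking : X ≃ Fin (Fintype.card X) :=
  rankingOfKey (tierKey T x y) (tierKey_injective T x y)

variable {T x y}

theorem tierKey_lt_fst_iff (hx : x ∈ T) {w : X} (hw : w ≠ x) :
    tierKey T x y w < tierKey T x y x ↔ w ∈ T := by
  by_cases hwT : w ∈ T <;> by_cases hwy : w = y <;>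
    simp_all [tierKey, tier, Prod.Lex.toLex_lt_toLex]

theorem tierKey_lt_snd_iff (hy : y ∈ T) (hxy : x ≠ y) {w : X} (hw : w ≠ y) :
    tierKey T x y w < tierKey T x y y ↔ w ∈ T ∧ w ≠ x := by
  by_cases hwT : w ∈ T <;> by_cases hwx : w = x <;>
    simp_all [tierKey, tier, Prod.Lex.toLex_lt_toLex, eq_comm]

theorem tierKey_lt_iff_swap {w z : X} (hzx : z ≠ x) (hzy : z ≠ y) :
    tierKey T x y w < tierKey T x y z ↔ tierKey T y x w < tierKey T y x z := by
  by_cases hwx : w = x <;> by_cases hwy : w = y <;> by_cases hwT : w ∈ T <;>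
    by_cases hzT : z ∈ T <;> simp_all [tierKey, tier, Prod.Lex.toLex_lt_toLex]

variable (𝒟 : Finset (Finset X))

theorem rhoVec_tierRanking_fst (hx : x ∈ T) (D : 𝒟) :
    rhoVec 𝒟 (tierRanking T x y) (D, x) = if x ∈ D.1 ∧ D.1 ⊆ T then 1 else 0 := by
  refine if_congr (and_congr_right fun _ => ?_) rfl rfl
  simp only [tierRanking, rankingOfKey_lt_rankingOfKey_iff]
  refine ⟨fun h w hw => ?_, fun h w hw hwx => (tierKey_lt_fst_iff hx hwx).2 (h hw)⟩
  by_cases hwx : w = x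
  · exact hwx ▸ hx
  · exact (tierKey_lt_fst_iff hx hwx).1 (h w hw hwx)

theorem rhoVec_tierRanking_snd (hy : y ∈ T) (hxy : x ≠ y) (D : 𝒟) :
    rhoVec 𝒟 (tierRanking T x y) (D, y) = if y ∈ D.1 ∧ x ∉ D.1 ∧ D.1 ⊆ T then 1 else 0 := by
  refine if_congr (and_congr_right fun _ => ?_) rfl rfl
  simp only [tierRanking, rankingOfKey_lt_rankingOfKey_iff]
  constructor
  · intro h
    refine ⟨fun hxD => ((tierKey_lt_snd_iff hy hxy hxy).1 (h x hxD hxy)).2 rfl, fun w hw => ?_⟩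
    by_cases hwy : w = y
    · exact hwy ▸ hy
    · exact ((tierKey_lt_snd_iff hy hxy hwy).1 (h w hw hwy)).1
  · rintro ⟨hxD, hDT⟩ w hw hwy
    exact (tierKey_lt_snd_iff hy hxy hwy).2 ⟨hDT hw, fun hwx => hxD (hwx ▸ hw)⟩

theorem rhoVec_tierRanking_swap {z : X} (hzx : z ≠ x) (hzy : z ≠ y) (D : 𝒟) :
    rhoVec 𝒟 (tierRanking T x y) (D, z) = rhoVec 𝒟 (tierRanking T y x) (D, z) := by
  simp only [rhoVec, tierRanking, rankingOfKey_lt_rankingOfKey_iff,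
    tierKey_lt_iff_swap hzx hzy]

theorem rhoVec_tierRanking_sub (hx : x ∈ T) (hy : y ∈ T) (hxy : x ≠ y) :
    rhoVec 𝒟 (tierRanking T x y) - rhoVec 𝒟 (tierRanking T y x) =
      ∑ D with x ∈ D.1 ∧ y ∈ D.1 ∧ D.1 ⊆ T, (Pi.single (D, x) 1 - Pi.single (D, y) 1) := by
  ext ⟨D, z⟩
  simp only [Pi.sub_apply, Finset.sum_apply, Pi.single_apply, Prod.mk.injEq, ite_and,
    sum_sub_distrib, sum_ite_eq, mem_filter, mem_univ, true_and]
  by_cases hzx : z = x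
  · subst hzx
    rw [rhoVec_tierRanking_fst 𝒟 hx, rhoVec_tierRanking_snd 𝒟 hx hxy.symm]
    split_ifs <;> simp_all
  by_cases hzy : z = y
  · subst hzy
    rw [rhoVec_tierRanking_fst 𝒟 hy, rhoVec_tierRanking_snd 𝒟 hy hxy]
    split_ifs <;> simp_all
  rw [rhoVec_tierRanking_swap 𝒟 hzx hzy]
  simp [hzx, hzy]

theorem single_sub_single_mem_vectorSpan_rhoVec (hxy : x ≠ y) (D : Finset X) (hD : D ∈ 𝒟)
    (hx : x ∈ D) (hy : y ∈ D) :
    (Pi.single (⟨D, hD⟩, x) 1 - Pi.single (⟨D, hD⟩, y) 1 : 𝒟 × X → ℝ) ∈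
      vectorSpan ℝ (Set.range fun π : X ≃ Fin (Fintype.card X) => rhoVec 𝒟 π) := by
  induction D using Finset.strongInduction with
  | H D ih =>
  have hsub := vsub_mem_vectorSpan ℝ
    (s := Set.range fun π : X ≃ Fin (Fintype.card X) => rhoVec 𝒟 π)
    (Set.mem_range_self (tierRanking D x y)) (Set.mem_range_self (tierRanking D y x))
  rw [vsub_eq_sub, rhoVec_tierRanking_sub 𝒟 hx hy hxy,
    ← add_sum_erase _ _ (mem_filter.2 ⟨mem_univ ⟨D, hD⟩, hx, hy, subset_rfl⟩)] at hsub
  refine (Submodule.add_mem_iff_left _ (Submodule.sum_mem _ fun D' hD' => ?_)).1 hsub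
  obtain ⟨hD'D, -, hxD', hyD', hD'⟩ := by simpa only [mem_erase, mem_filter] using hD'
  exact ih D'.1 (hD'.ssubset_of_ne fun h => hD'D (Subtype.ext h)) D'.2 hxD' hyD'

end TierRanking

section Constraints

variable {X : Type*} (𝒟 : Finset (Finset X))

noncomputable def constraintMap :
    (𝒟 × X → ℝ) →ₗ[ℝ] (𝒟 → ℝ) × ({p : 𝒟 × X // p.2 ∉ p.1.1} → ℝ) :=
  (LinearMap.pi fun D => ∑ x ∈ D.1, LinearMap.proj (D, x)).prod
    (LinearMap.funLeft ℝ ℝ Subtype.val)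

variable {𝒟}

theorem constraintMap_apply (v : 𝒟 × X → ℝ) :
    constraintMap 𝒟 v = (fun D => ∑ x ∈ D.1, v (D, x), fun p => v p.1) := by
  ext <;> simp [constraintMap, LinearMap.funLeft]

theorem constraintMap_eq_iff {q : 𝒟 × X → ℝ} {r : 𝒟 → ℝ} :
    constraintMap 𝒟 q = (r, 0) ↔
      (∀ D : 𝒟, ∑ x ∈ D.1, q (D, x) = r D) ∧ ∀ (D : 𝒟) (x : X), x ∉ D.1 → q (D, x) = 0 := by
  simp [constraintMap_apply, Prod.ext_iff, funext_iff]

theorem constraintMap_surjective (hne : ∀ D ∈ 𝒟, D.Nonempty) :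
    Surjective (constraintMap 𝒟) := by
  classical
  choose c hc using fun D : 𝒟 => hne D.1 D.2
  rintro ⟨r, u⟩
  refine ⟨fun p => if h : p.2 ∈ p.1.1 then (if p.2 = c p.1 then r p.1 else 0) else u ⟨p, h⟩,
    ?_⟩
  rw [constraintMap_apply, Prod.mk.injEq]
  refine ⟨funext fun D => ?_, funext fun p => dif_neg p.2⟩
  dsimp only
  rw [sum_congr rfl (g := fun x => if x = c D then r D else 0) fun x hx => dif_pos hx,
    sum_ite_eq', if_pos (hc D)]

variable [Fintype X] [DecidableEq X]

theorem card_subtype_notMem : Fintype.card {p : 𝒟 × X // p.2 ∉ p.1.1} =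
    ∑ D ∈ 𝒟, (Fintype.card X - D.card) := by
  rw [Fintype.card_congr (Equiv.subtypeProdEquivSigmaSubtype fun (D : 𝒟) x => x ∉ D.1),
    Fintype.card_sigma, ← sum_coe_sort 𝒟]
  refine sum_congr rfl fun D _ => ?_
  rw [Fintype.card_subtype_compl, Fintype.card_coe]

theorem finrank_ker_constraintMap (hne : ∀ D ∈ 𝒟, D.Nonempty) :
    Module.finrank ℝ (LinearMap.ker (constraintMap 𝒟)) = ∑ D ∈ 𝒟, (D.card - 1) := by
  have hrank := (constraintMap 𝒟).finrank_range_add_finrank_ker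
  rw [LinearMap.range_eq_top.2 (constraintMap_surjective hne), finrank_top, Module.finrank_prod,
    Module.finrank_fintype_fun_eq_card, Module.finrank_fintype_fun_eq_card,
    Module.finrank_fintype_fun_eq_card, card_subtype_notMem, Fintype.card_prod,
    Fintype.card_coe] at hrank
  have hsplit : ∑ D ∈ 𝒟, (D.card - 1) + (𝒟.card + ∑ D ∈ 𝒟, (Fintype.card X - D.card)) =
      𝒟.card * Fintype.card X := by
    rw [card_eq_sum_ones, ← sum_add_distrib, ← sum_add_distrib, sum_mul, one_mul]
    refine sum_congr rfl fun D hD => ?_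
    have := (hne D hD).card_pos
    have := D.card_le_univ
    omega
  omega

theorem sum_rhoVec_eq_one {m : ℕ} (π : X ≃ Fin m) {D : 𝒟} (hD : D.1.Nonempty) :
    ∑ x ∈ D.1, rhoVec 𝒟 π (D, x) = 1 := by
  obtain ⟨t, htD, ht⟩ := D.1.exists_max_image π hD
  have htop : ∀ x ∈ D.1, (∀ w ∈ D.1, w ≠ x → π w < π x) ↔ x = t := by
    refine fun x hx => ⟨fun h => ?_, ?_⟩
    · by_contra hxt
      exact (h t htD (Ne.symm hxt)).not_ge (ht x hx)
    rintro rfl w hw hwx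
    exact (ht w hw).lt_of_ne (π.injective.ne hwx)
  have hrho : ∀ x ∈ D.1, rhoVec 𝒟 π (D, x) = if x = t then 1 else 0 := fun x hx =>
    if_congr ((and_iff_right hx).trans (htop x hx)) rfl rfl
  rw [sum_congr rfl hrho, sum_ite_eq', if_pos htD]

theorem constraintMap_rhoVec (hne : ∀ D ∈ 𝒟, D.Nonempty) {m : ℕ} (π : X ≃ Fin m) :
    constraintMap 𝒟 (rhoVec 𝒟 π) = (1, 0) :=
  constraintMap_eq_iff.2
    ⟨fun D => sum_rhoVec_eq_one π (hne D.1 D.2), fun _ _ hx => if_neg fun h => hx h.1⟩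

theorem eq_sum_smul_single_sub_single {v : 𝒟 × X → ℝ}
    (hv : v ∈ LinearMap.ker (constraintMap 𝒟)) (c : 𝒟 → X) :
    v = ∑ p : 𝒟 × X, v p • (Pi.single p 1 - Pi.single (p.1, c p.1) 1) := by
  obtain ⟨hsum, hoff⟩ := constraintMap_eq_iff.1 hv
  have hrow : ∀ D : 𝒟, ∑ x, v (D, x) = 0 := fun D =>
    (sum_subset (subset_univ D.1) fun x _ hx => hoff D x hx).symm.trans (hsum D)
  ext ⟨D, z⟩
  simp only [Finset.sum_apply, Pi.smul_apply, Pi.sub_apply, Pi.single_apply, Prod.mk.injEq,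
    ite_and, smul_eq_mul, mul_sub, mul_ite, mul_one, mul_zero, sum_sub_distrib, sum_ite_eq,
    mem_univ, ↓reduceIte, Fintype.sum_prod_type, univ_eq_attach, sum_ite_irrel, sum_const_zero,
    mem_attach]
  split_ifs <;> simp [hrow]

theorem vectorSpan_range_rhoVec (hne : ∀ D ∈ 𝒟, D.Nonempty) :
    vectorSpan ℝ (Set.range fun π : X ≃ Fin (Fintype.card X) => rhoVec 𝒟 π) =
      LinearMap.ker (constraintMap 𝒟) := by
  refine le_antisymm ?_ fun v hv => ?_
  · rw [vectorSpan_def, Submodule.span_le]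
    rintro _ ⟨_, ⟨π, rfl⟩, _, ⟨σ, rfl⟩, rfl⟩
    simp [constraintMap_rhoVec hne]
  choose c hc using fun D : 𝒟 => hne D.1 D.2
  rw [eq_sum_smul_single_sub_single hv c]
  refine Submodule.sum_mem _ fun ⟨D, x⟩ _ => ?_
  by_cases hx : x ∈ D.1
  · by_cases hxc : x = c D
    · simp [hxc]
    · exact Submodule.smul_mem _ _
        (single_sub_single_mem_vectorSpan_rhoVec 𝒟 hxc D.1 D.2 hx (hc D))
  · simp [(constraintMap_eq_iff.1 hv).2 D x hx]

end Constraints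

theorem affineSpan_rho_and_dim_general {X : Type*} [Fintype X] [DecidableEq X]
    (𝒟 : Finset (Finset X))
    (hne : ∀ D ∈ 𝒟, Finset.Nonempty D) :
    ((affineSpan ℝ (Set.range (fun π : X ≃ Fin (Fintype.card X) => rhoVec 𝒟 π)) :
        Set (({D : Finset X // D ∈ 𝒟} × X) → ℝ)) =
      {q | (∀ D : {D : Finset X // D ∈ 𝒟}, ∑ x ∈ D.1, q (D, x) = 1) ∧
           ∀ (D : {D : Finset X // D ∈ 𝒟}) (x : X), x ∉ D.1 → q (D, x) = 0})
    ∧ Module.finrank ℝ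
        (affineSpan ℝ
          (Set.range (fun π : X ≃ Fin (Fintype.card X) => rhoVec 𝒟 π))).direction
        = ∑ D ∈ 𝒟, (D.card - 1) := by
  have hspan : affineSpan ℝ (Set.range fun π : X ≃ Fin (Fintype.card X) => rhoVec 𝒟 π) =
      .mk' (rhoVec 𝒟 (Fintype.equivFin X)) (LinearMap.ker (constraintMap 𝒟)) := by
    rw [← vectorSpan_range_rhoVec hne, ← direction_affineSpan]
    exact (AffineSubspace.mk'_eq (mem_affineSpan ℝ (Set.mem_range_self _))).symm
  refine ⟨?_, by rw [hspan, AffineSubspace.direction_mk', finrank_ker_constraintMap hne]⟩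
  ext q
  rw [hspan, SetLike.mem_coe, AffineSubspace.mem_mk', vsub_eq_sub, LinearMap.mem_ker, map_sub,
    sub_eq_zero, constraintMap_rhoVec hne, constraintMap_eq_iff]
  simp

/-- The affine hull of the set of deterministic choice vectors `{ρ^π}` is cut out by the
adding-up and zero constraints; consequently its dimension is `Σ_{D ∈ 𝒟} (|D| - 1)`. -/
theorem affineSpan_rho_and_dim {X : Type*} [Fintype X] [DecidableEq X]
    (hX : 2 ≤ Fintype.card X) (𝒟 : Finset (Finset X))
    (hne : ∀ D ∈ 𝒟, Finset.Nonempty D)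
    (h23 : ∀ D : Finset X, D.card = 2 ∨ D.card = 3 → D ∈ 𝒟) :
    ((affineSpan ℝ (Set.range (fun π : X ≃ Fin (Fintype.card X) => rhoVec 𝒟 π)) :
        Set (({D : Finset X // D ∈ 𝒟} × X) → ℝ)) =
      {q | (∀ D : {D : Finset X // D ∈ 𝒟}, ∑ x ∈ D.1, q (D, x) = 1) ∧
           ∀ (D : {D : Finset X // D ∈ 𝒟}) (x : X), x ∉ D.1 → q (D, x) = 0})
    ∧ Module.finrank ℝ
        (affineSpan ℝ
          (Set.range (fun π : X ≃ Fin (Fintype.card X) => rhoVec 𝒟 π))).direction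
        = ∑ D ∈ 𝒟, (D.card - 1) :=
  affineSpan_rho_and_dim_general 𝒟 hne
end

section
/- Let X be a finite set, 𝒟 a collection of nonempty subsets of X containing all two- and three-element subsets, and for each ranking π let ρ^π ∈ ℝ^{𝒟×X} be the associated deterministic choice vector. For t ∈ ℝ^{𝒟×X}, the inner products ρ^π · t are equal for all rankings π if and only if t(D,x) = t(D,y) for every D ∈ 𝒟 and all x, y ∈ D. -/
/-!
Since `ρ^π` selects exactly the `π`-best element of each choice set, `ρ^π · t` is the sum over
`E ∈ 𝒟` of `t (E, best_π E)`; this is independent of `π` when `t` is constant on each `E`.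
Conversely, fix `x ≠ y` in `D ∈ 𝒟` and a ranking `π` with `x` best and `y` second-best in `D` and
everything outside `D` above `x`. Exchanging `x` and `y` in `π` changes the best element exactly
of the sets `E` with `{x, y} ⊆ E ⊆ D`, from `x` to `y`, so the sum of `t (E, x) - t (E, y)` over
these `E` vanishes. Induction along `⊆` then makes every summand vanish.
-/

open Finset

open scoped Classical in
theorem eq_zero_of_forall_sum_le_eq_zero {ι M : Type*} [Fintype ι] [PartialOrder ι]
    [AddCommGroup M] (P : ι → Prop) (f : ι → M)
    (h : ∀ i, P i → ∑ j with P j ∧ j ≤ i, f j = 0) (i : ι) (hi : P i) : f i = 0 := by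
  induction i using WellFoundedLT.induction with
  | _ i ih =>
    have hrest : ∑ j ∈ (univ.filter fun j => P j ∧ j ≤ i).erase i, f j = 0 :=
      sum_eq_zero fun j hj => by
        obtain ⟨hji, hj⟩ := mem_erase.mp hj
        obtain ⟨hPj, hle⟩ := (mem_filter.mp hj).2
        exact ih j (hle.lt_of_ne hji) hPj
    rw [← h i hi, ← add_sum_erase _ _ (mem_filter.mpr ⟨mem_univ i, hi, le_rfl⟩), hrest, add_zero]

theorem exists_equiv_fin_lt_of_lt {X α : Type*} [Fintype X] [LinearOrder α] (g : X → α) :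
    ∃ π : X ≃ Fin (Fintype.card X), ∀ a b, g a < g b → π a < π b := by
  let e := Fintype.equivFin X
  refine ⟨e.trans (Tuple.sort (g ∘ e.symm)).symm, fun a b hab =>
    (Tuple.monotone_sort (g ∘ e.symm)).reflect_lt ?_⟩
  simpa using hab

section rhoVec

variable {X : Type*} [Fintype X] [DecidableEq X] {𝒟 : Finset (Finset X)} {m : ℕ}

theorem rhoVec_eq_ite (π : X ≃ Fin m) {E : {D // D ∈ 𝒟}} {z : X} (hz : z ∈ E.1)
    (hmax : ∀ w ∈ E.1, π w ≤ π z) (x : X) : rhoVec 𝒟 π (E, x) = if x = z then 1 else 0 := by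
  unfold rhoVec
  congr 1
  apply propext
  constructor
  · rintro ⟨hx, hbest⟩
    by_contra hxz
    exact (hmax x hx).not_gt (hbest z hz (Ne.symm hxz))
  · rintro rfl
    exact ⟨hz, fun w hw hwx => (hmax w hw).lt_of_ne (π.injective.ne hwx)⟩

theorem sum_rhoVec_mul_eq (π : X ≃ Fin m) (t : {D // D ∈ 𝒟} × X → ℝ) {E : {D // D ∈ 𝒟}}
    {z : X} (hz : z ∈ E.1) (hmax : ∀ w ∈ E.1, π w ≤ π z) :
    ∑ x, rhoVec 𝒟 π (E, x) * t (E, x) = t (E, z) := by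
  simp [rhoVec_eq_ite π hz hmax]

end rhoVec

structure IsTopPair {X : Type*} {m : ℕ} (π : X ≃ Fin m) (D : Finset X) (x y : X) : Prop where
  snd_lt_fst : π y < π x
  le_snd : ∀ z ∈ D, z ≠ x → π z ≤ π y
  fst_lt_of_notMem : ∀ w ∉ D, π x < π w

namespace IsTopPair

variable {X : Type*} {m : ℕ} {π : X ≃ Fin m} {D E : Finset X} {x y : X}

theorem exists_of_mem [Fintype X] (hx : x ∈ D) (hy : y ∈ D) (hxy : x ≠ y) :
    ∃ π : X ≃ Fin (Fintype.card X), IsTopPair π D x y := by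
  classical
  obtain ⟨π, hπ⟩ := exists_equiv_fin_lt_of_lt fun z : X =>
    if z = x then 2 else if z = y then 1 else if z ∈ D then 0 else 3
  refine ⟨π, ⟨hπ y x (by simp [hxy.symm]), fun z hz hzx => ?_, fun w hw => hπ x w ?_⟩⟩
  · rcases eq_or_ne z y with rfl | hzy
    · rfl
    · exact (hπ z y (by simp [hzx, hzy, hz, hxy.symm])).le
  · simp [ne_of_mem_of_not_mem hx hw |>.symm, ne_of_mem_of_not_mem hy hw |>.symm, hw]

theorem fst_mem (h : IsTopPair π D x y) : x ∈ D :=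
  by_contra fun hx => (h.fst_lt_of_notMem x hx).false

theorem snd_mem (h : IsTopPair π D x y) : y ∈ D :=
  by_contra fun hy => (h.fst_lt_of_notMem y hy).asymm h.snd_lt_fst

theorem le_fst (h : IsTopPair π D x y) : ∀ w ∈ D, π w ≤ π x := fun w hw => by
  rcases eq_or_ne w x with rfl | hwx
  · rfl
  · exact (h.le_snd w hw hwx).trans h.snd_lt_fst.le

variable [DecidableEq X]

theorem swap (h : IsTopPair π D x y) : IsTopPair ((Equiv.swap x y).trans π) D y x where
  snd_lt_fst := by simpa using h.snd_lt_fst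
  le_snd z hz hzy := by
    rcases eq_or_ne z x with rfl | hzx
    · rfl
    · simpa [Equiv.swap_apply_of_ne_of_ne hzx hzy] using h.le_snd z hz hzx
  fst_lt_of_notMem w hw := by
    have hwx : w ≠ x := ne_of_mem_of_not_mem h.fst_mem hw |>.symm
    have hwy : w ≠ y := ne_of_mem_of_not_mem h.snd_mem hw |>.symm
    simpa [Equiv.swap_apply_of_ne_of_ne hwx hwy] using h.fst_lt_of_notMem w hw

theorem swap_le_swap (h : IsTopPair π D x y) {z w : X} (hxz : π x < π z) (hwz : π w ≤ π z) :
    (Equiv.swap x y).trans π w ≤ (Equiv.swap x y).trans π z := by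
  have hzx : z ≠ x := by rintro rfl; exact hxz.false
  have hzy : z ≠ y := by rintro rfl; exact hxz.asymm h.snd_lt_fst
  simp only [Equiv.trans_apply, Equiv.swap_apply_of_ne_of_ne hzx hzy]
  rcases eq_or_ne w x with rfl | hwx
  · simpa using (h.snd_lt_fst.trans hxz).le
  rcases eq_or_ne w y with rfl | hwy
  · simpa using hxz.le
  rwa [Equiv.swap_apply_of_ne_of_ne hwx hwy]

theorem exists_isMax_isMax_swap (h : IsTopPair π D x y) (hne : E.Nonempty)
    (hE : ¬(x ∈ E ∧ y ∈ E ∧ E ⊆ D)) :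
    ∃ z ∈ E, (∀ w ∈ E, π w ≤ π z) ∧
      ∀ w ∈ E, (Equiv.swap x y).trans π w ≤ (Equiv.swap x y).trans π z := by
  by_cases hED : E ⊆ D
  · by_cases hx : x ∈ E
    · have hy : y ∉ E := fun hy => hE ⟨hx, hy, hED⟩
      exact ⟨x, hx, fun w hw => h.le_fst w (hED hw),
        fun w hw => h.swap.le_snd w (hED hw) (ne_of_mem_of_not_mem hw hy)⟩
    by_cases hy : y ∈ E
    · exact ⟨y, hy, fun w hw => h.le_snd w (hED hw) (ne_of_mem_of_not_mem hw hx),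
        fun w hw => h.swap.le_fst w (hED hw)⟩
    obtain ⟨z, hz, hmax⟩ := E.exists_max_image π hne
    have hσ : ∀ w ∈ E, (Equiv.swap x y).trans π w = π w := fun w hw =>
      congrArg π (Equiv.swap_apply_of_ne_of_ne (ne_of_mem_of_not_mem hw hx)
        (ne_of_mem_of_not_mem hw hy))
    exact ⟨z, hz, hmax, fun w hw => by rw [hσ w hw, hσ z hz]; exact hmax w hw⟩
  · obtain ⟨w₀, hw₀, hw₀D⟩ := not_subset.mp hED
    obtain ⟨z, hz, hmax⟩ := E.exists_max_image π hne
    have hxz : π x < π z := (h.fst_lt_of_notMem w₀ hw₀D).trans_le (hmax w₀ hw₀)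
    exact ⟨z, hz, hmax, fun w hw => h.swap_le_swap hxz (hmax w hw)⟩

theorem sum_rhoVec_mul_sub_swap [Fintype X] {𝒟 : Finset (Finset X)} (h : IsTopPair π D x y)
    (t : {D // D ∈ 𝒟} × X → ℝ) (E : {D // D ∈ 𝒟}) (hne : E.1.Nonempty) :
    ∑ u, rhoVec 𝒟 π (E, u) * t (E, u) -
        ∑ u, rhoVec 𝒟 ((Equiv.swap x y).trans π) (E, u) * t (E, u) =
      if x ∈ E.1 ∧ y ∈ E.1 ∧ E.1 ⊆ D then t (E, x) - t (E, y) else 0 := by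
  split_ifs with hE
  · obtain ⟨hx, hy, hED⟩ := hE
    rw [sum_rhoVec_mul_eq π t hx fun w hw => h.le_fst w (hED hw),
      sum_rhoVec_mul_eq _ t hy fun w hw => h.swap.le_fst w (hED hw)]
  · obtain ⟨z, hz, hmax, hmax_swap⟩ := h.exists_isMax_isMax_swap hne hE
    rw [sum_rhoVec_mul_eq π t hz hmax, sum_rhoVec_mul_eq _ t hz hmax_swap, sub_self]

end IsTopPair

theorem dot_const_iff_general {X : Type*} [Fintype X] [DecidableEq X]
    (𝒟 : Finset (Finset X)) (hne : ∀ D ∈ 𝒟, Finset.Nonempty D)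
    (t : ({D : Finset X // D ∈ 𝒟} × X) → ℝ) :
    (∀ π σ : X ≃ Fin (Fintype.card X),
        ∑ i, rhoVec 𝒟 π i * t i = ∑ i, rhoVec 𝒟 σ i * t i) ↔
    ∀ D : {D : Finset X // D ∈ 𝒟}, ∀ x ∈ D.1, ∀ y ∈ D.1, t (D, x) = t (D, y) := by
  simp only [Fintype.sum_prod_type]
  constructor
  · intro H D x hx y hy
    rcases eq_or_ne x y with rfl | hxy
    · rfl
    refine sub_eq_zero.mp <| eq_zero_of_forall_sum_le_eq_zero (fun E => x ∈ E.1 ∧ y ∈ E.1)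
      (fun E => t (E, x) - t (E, y)) (fun D' ⟨hx', hy'⟩ => ?_) D ⟨hx, hy⟩
    obtain ⟨π, hπ⟩ := IsTopPair.exists_of_mem hx' hy' hxy
    have hswap := sub_eq_zero.mpr (H π ((Equiv.swap x y).trans π))
    simp only [← sum_sub_distrib, fun E => hπ.sum_rhoVec_mul_sub_swap t E (hne E.1 E.2),
      ← sum_filter] at hswap
    convert hswap using 2
    simp only [and_assoc, ← Subtype.coe_le_coe]
  · intro hc π σ
    refine sum_congr rfl fun E _ => ?_
    obtain ⟨z, hz, hmax⟩ := E.1.exists_max_image π (hne E.1 E.2)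
    obtain ⟨z', hz', hmax'⟩ := E.1.exists_max_image σ (hne E.1 E.2)
    rw [sum_rhoVec_mul_eq π t hz hmax, sum_rhoVec_mul_eq σ t hz' hmax']
    exact hc E z hz z' hz'

/-- `ρ^π · t` is the same for all rankings `π` iff `t` is constant on each choice set. -/
theorem dot_const_iff {X : Type*} [Fintype X] [DecidableEq X]
    (𝒟 : Finset (Finset X)) (hne : ∀ D ∈ 𝒟, Finset.Nonempty D)
    (h23 : ∀ D : Finset X, D.card = 2 ∨ D.card = 3 → D ∈ 𝒟)
    (t : ({D : Finset X // D ∈ 𝒟} × X) → ℝ) :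
    (∀ π σ : X ≃ Fin (Fintype.card X),
        ∑ i, rhoVec 𝒟 π i * t i = ∑ i, rhoVec 𝒟 σ i * t i) ↔
    ∀ D : {D : Finset X // D ∈ 𝒟}, ∀ x ∈ D.1, ∀ y ∈ D.1, t (D, x) = t (D, y) :=
  dot_const_iff_general 𝒟 hne t
end

section
/- Let X = {x_1,…,x_n} with n ≥ 3, let 𝒟 contain all two- and three-element subsets of X, let π be the ranking with π(x_i) > π(x_{i+1}) for all i, and π⁻ its reverse. Then the vertices ρ^π and ρ^{π⁻} of the random utility polytope are adjacent: there exist t ∈ ℝ^{𝒟×X} and a ∈ ℝ with ρ^π · t = ρ^{π⁻} · t = a and ρ^σ · t > a for every ranking σ ∉ {π, π⁻}. -/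
/-!
With `X = Fin n`, `π` is decreasing and `π⁻` increasing. Take `t(D, x) = n` when
`D = {x - 1, x, x + 1}`, `t({x - 1, x}, x) = 1` for `x ≥ 2`, `t({0, 1}, 1) = 2 - n`, and `t = 0`
otherwise. No weight sits on the least element of a menu, so `ρ^π · t = 0`; `π⁻` picks `x` from
every `{x - 1, x}`, so `ρ^{π⁻} · t = (2 - n) + (n - 2) = 0`. Any other ranking `σ` is neither
increasing nor decreasing. If `σ` prefers `1` to `0`, it has a peak `σ(x - 1) < σ(x) > σ(x + 1)`
(the maximum of `σ` up to the end of a descent), worth `n`, while at most `n - 2` is lost on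
`{0, 1}`. If `σ` prefers `0` to `1`, it has an ascent `x - 1 → x` with `x ≥ 2`, worth `1`, and
every weight it collects is nonnegative.
-/

open Finset

namespace RandomUtility

section Ranking

variable {X : Type*} {m : ℕ}

def IsBest (π : X ≃ Fin m) (D : Finset X) (x : X) : Prop :=
  x ∈ D ∧ ∀ y ∈ D, y ≠ x → π y < π x

instance [DecidableEq X] (π : X ≃ Fin m) (D : Finset X) (x : X) : Decidable (IsBest π D x) :=
  inferInstanceAs (Decidable (_ ∧ _))

variable {π : X ≃ Fin m} {D : Finset X} {x y z : X}

theorem IsBest.unique {x' : X} (h : IsBest π D x) (h' : IsBest π D x') : x = x' := by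
  by_contra hne
  exact lt_asymm (h.2 x' h'.1 (Ne.symm hne)) (h'.2 x h.1 hne)

variable [DecidableEq X]

theorem isBest_pair (h : π y < π x) : IsBest π {y, x} x := by
  refine ⟨mem_insert_of_mem (mem_singleton_self x), fun w hw hwx => ?_⟩
  rcases mem_insert.1 hw with rfl | hw
  · exact h
  · exact absurd (mem_singleton.1 hw) hwx

theorem isBest_triple (hy : π y < π x) (hz : π z < π x) : IsBest π {y, x, z} x := by
  refine ⟨by simp, fun w hw hwx => ?_⟩
  simp only [mem_insert, mem_singleton] at hw
  rcases hw with rfl | rfl | rfl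
  exacts [hy, absurd rfl hwx, hz]

omit [DecidableEq X] in
theorem isBest_iff_of_strictMono [LinearOrder X] (hπ : StrictMono π) :
    IsBest π D x ↔ x ∈ D ∧ ∀ y ∈ D, y ≠ x → y < x := by
  simp only [IsBest, hπ.lt_iff_lt]

omit [DecidableEq X] in
theorem isBest_iff_of_strictAnti [LinearOrder X] (hπ : StrictAnti π) :
    IsBest π D x ↔ x ∈ D ∧ ∀ y ∈ D, y ≠ x → x < y := by
  simp only [IsBest, hπ.lt_iff_gt]

variable [Fintype X]

def bestWeight (π : X ≃ Fin m) (w : Finset X → X → ℝ) (D : Finset X) : ℝ :=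
  ∑ x, if IsBest π D x then w D x else 0

variable {w : Finset X → X → ℝ}

theorem bestWeight_eq (h : IsBest π D x) : bestWeight π w D = w D x :=
  (sum_eq_single x (fun y _ hyx => if_neg fun hy => hyx (hy.unique h)) (by simp)).trans
    (if_pos h)

theorem bestWeight_eq_zero (hw : ∀ x, IsBest π D x → w D x = 0) : bestWeight π w D = 0 :=
  sum_eq_zero fun x _ => ite_eq_right_iff.2 (hw x)

theorem le_bestWeight {c : ℝ} (hc : c ≤ 0) (hw : ∀ x, IsBest π D x → c ≤ w D x) :
    c ≤ bestWeight π w D := by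
  by_cases h : ∃ x, IsBest π D x
  · obtain ⟨x, hx⟩ := h
    exact (bestWeight_eq hx).symm ▸ hw x hx
  · rwa [bestWeight, sum_eq_zero fun x _ => if_neg fun hx => h ⟨x, hx⟩]

theorem sum_rhoVec_mul (𝒟 : Finset (Finset X)) (π : X ≃ Fin m) (w : Finset X → X → ℝ) :
    ∑ q, rhoVec 𝒟 π q * w q.1.1 q.2 = ∑ D ∈ 𝒟, bestWeight π w D := by
  rw [Fintype.sum_prod_type, ← sum_coe_sort 𝒟]
  refine sum_congr rfl fun D _ => sum_congr rfl fun x _ => ?_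
  simp only [rhoVec, ite_mul, one_mul, zero_mul]
  exact if_congr Iff.rfl rfl rfl

end Ranking

section Order

variable {α β : Type*} [LinearOrder α] [LocallyFiniteOrder α] [LinearOrder β] {f : α → β}

theorem exists_covBy_descent_of_not_strictMono (hf : Function.Injective f)
    (h : ¬StrictMono f) : ∃ c d, c ⋖ d ∧ f d < f c := by
  simp only [strictMono_iff_forall_covBy, not_forall, not_lt] at h
  obtain ⟨c, d, hcd, hle⟩ := h
  exact ⟨c, d, hcd, hle.lt_of_ne (hf.ne hcd.lt.ne')⟩

theorem exists_covBy_ascent_of_not_strictAnti (hf : Function.Injective f)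
    (h : ¬StrictAnti f) : ∃ c d, c ⋖ d ∧ f c < f d := by
  simp only [strictAnti_iff_forall_covBy, not_forall, not_lt] at h
  obtain ⟨c, d, hcd, hle⟩ := h
  exact ⟨c, d, hcd, hle.lt_of_ne (hf.ne hcd.lt.ne)⟩

/-- The maximum of `f` on `[a, d]` is a peak: it is neither `a` nor `d`. -/
theorem exists_peak_of_ascent_of_descent (hf : Function.Injective f) {a b c d : α}
    (hab : a ⋖ b) (hfab : f a < f b) (hcd : c ⋖ d) (hfcd : f d < f c) (hac : a ≤ c) :
    ∃ x y z, y ⋖ x ∧ x ⋖ z ∧ f y < f x ∧ f z < f x := by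
  have had : a < d := hac.trans_lt hcd.lt
  obtain ⟨x, hx, hmax⟩ := (Icc a d).exists_max_image f ⟨a, left_mem_Icc.2 had.le⟩
  rw [mem_Icc] at hx
  have hlt : ∀ v ∈ Icc a d, v ≠ x → f v < f x := fun v hv hvx =>
    (hmax v hv).lt_of_ne (hf.ne hvx)
  have hax : a < x := hx.1.lt_of_ne <| by
    rintro rfl
    exact (hmax b (mem_Icc.2 ⟨hab.lt.le, hab.ge_of_gt had⟩)).not_gt hfab
  have hxd : x < d := hx.2.lt_of_ne <| by
    rintro rfl
    exact (hmax c (mem_Icc.2 ⟨hac, hcd.lt.le⟩)).not_gt hfcd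
  obtain ⟨y, hay, hyx⟩ := exists_le_covBy_of_lt hax
  obtain ⟨z, hxz, hzd⟩ := exists_covBy_le_of_lt hxd
  exact ⟨x, y, z, hyx, hxz, hlt y (mem_Icc.2 ⟨hay, hyx.lt.le.trans hx.2⟩) hyx.lt.ne,
    hlt z (mem_Icc.2 ⟨hx.1.trans hxz.lt.le, hzd⟩) hxz.lt.ne'⟩

end Order

theorem sum_pos_of_add_pos {ι : Type*} [DecidableEq ι] {s : Finset ι} {f : ι → ℝ} {i j : ι}
    (hi : i ∈ s) (hj : j ∈ s) (hji : j ≠ i) (hf : ∀ k ∈ s, k ≠ i → 0 ≤ f k)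
    (hpos : 0 < f i + f j) : 0 < ∑ k ∈ s, f k := by
  rw [← add_sum_erase s f hi]
  have := single_le_sum (fun k hk => hf k (mem_of_mem_erase hk) (ne_of_mem_erase hk))
    (mem_erase.2 ⟨hji, hj⟩)
  linarith

section Weight

variable {n : ℕ} {D : Finset (Fin n)} {x y z : Fin n}

theorem val_add_one_of_covBy (h : y ⋖ x) : (y : ℕ) + 1 = x :=
  Nat.covBy_iff_add_one_eq.1 (Fin.covBy_iff.1 h)

/-- `ascentWeight n x = t({x - 1, x}, x)`; the value `0` at `x = 0`, which has no predecessor,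
lets `sum_ascentWeight` run over all of `Fin n`. -/
def ascentWeight (n k : ℕ) : ℝ :=
  if k = 0 then 0 else if k = 1 then 2 - n else 1

open Classical in
noncomputable def separatingWeight (n : ℕ) (D : Finset (Fin n)) (x : Fin n) : ℝ :=
  if ∃ y z, y ⋖ x ∧ x ⋖ z ∧ D = {y, x, z} then n
  else if ∃ y, y ⋖ x ∧ D = {y, x} then ascentWeight n x
  else 0

theorem separatingWeight_of_least (h : ∀ y ∈ D, y ≠ x → x < y) :
    separatingWeight n D x = 0 := by
  have hD : ∀ y, y ⋖ x → y ∉ D := fun y hyx hy => (h y hy hyx.lt.ne).not_gt hyx.lt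
  rw [separatingWeight, if_neg, if_neg]
  · rintro ⟨y, hyx, rfl⟩
    exact hD y hyx (mem_insert_self _ _)
  · rintro ⟨y, z, hyx, -, rfl⟩
    exact hD y hyx (mem_insert_self _ _)

open Classical in
theorem separatingWeight_of_greatest (h : ∀ y ∈ D, y ≠ x → y < x) :
    separatingWeight n D x = if ∃ y, y ⋖ x ∧ D = {y, x} then ascentWeight n x else 0 := by
  rw [separatingWeight, if_neg]
  rintro ⟨y, z, -, hxz, rfl⟩
  exact (h z (by simp) hxz.lt.ne').not_gt hxz.lt

theorem separatingWeight_triple (hyx : y ⋖ x) (hxz : x ⋖ z) :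
    separatingWeight n {y, x, z} x = n :=
  if_pos ⟨y, z, hyx, hxz, rfl⟩

theorem separatingWeight_pair (hyx : y ⋖ x) : separatingWeight n {y, x} x = ascentWeight n x := by
  rw [separatingWeight_of_greatest, if_pos ⟨y, hyx, rfl⟩]
  intro v hv hvx
  rcases mem_insert.1 hv with rfl | hv
  · exact hyx.lt
  · exact absurd (mem_singleton.1 hv) hvx

theorem eq_of_covBy_of_val_eq_one {a b : Fin n} (ha : (a : ℕ) = 0) (hb : (b : ℕ) = 1)
    (hyx : y ⋖ x) (hx : (x : ℕ) = 1) : y = a ∧ x = b := by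
  have := val_add_one_of_covBy hyx
  exact ⟨Fin.ext (by omega), Fin.ext (by omega)⟩

theorem separatingWeight_nonneg {a b : Fin n} (ha : (a : ℕ) = 0) (hb : (b : ℕ) = 1)
    (h : ¬(D = {a, b} ∧ x = b)) : 0 ≤ separatingWeight n D x := by
  unfold separatingWeight ascentWeight
  split_ifs with _ hpair _ hx1 <;> try positivity
  obtain ⟨y, hyx, rfl⟩ := hpair
  obtain ⟨rfl, rfl⟩ := eq_of_covBy_of_val_eq_one ha hb hyx hx1
  exact absurd ⟨rfl, rfl⟩ h

theorem two_sub_le_separatingWeight (hn : 2 ≤ n) : (2 - n : ℝ) ≤ separatingWeight n D x := by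
  have : (2 : ℝ) ≤ n := by exact_mod_cast hn
  unfold separatingWeight ascentWeight
  split_ifs <;> linarith

theorem sum_ascentWeight (n : ℕ) : ∑ x : Fin n, ascentWeight n x = 0 := by
  rw [Fin.sum_univ_eq_sum_range (ascentWeight n)]
  rcases lt_or_ge n 2 with hn | hn
  · exact sum_eq_zero fun k hk => if_pos (by rw [mem_range] at hk; omega)
  · obtain ⟨m, rfl⟩ := Nat.exists_eq_add_of_le' hn
    simp [sum_range_succ', ascentWeight]

open Classical in
theorem sum_bestWeight_refl {𝒟 : Finset (Finset (Fin n))}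
    (h2 : ∀ D : Finset (Fin n), D.card = 2 → D ∈ 𝒟) :
    ∑ D ∈ 𝒟, bestWeight (Equiv.refl (Fin n)) (separatingWeight n) D = 0 := by
  have hbest : ∀ D x, (if IsBest (Equiv.refl (Fin n)) D x then separatingWeight n D x else 0) =
      if ∃ y, y ⋖ x ∧ D = {y, x} then ascentWeight n x else 0 := by
    intro D x
    by_cases hb : IsBest (Equiv.refl (Fin n)) D x
    · rw [if_pos hb, separatingWeight_of_greatest ((isBest_iff_of_strictMono strictMono_id).1 hb).2]
    · rw [if_neg hb, if_neg]
      rintro ⟨y, hyx, rfl⟩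
      exact hb (isBest_pair hyx.lt)
  have hcount : ∀ x : Fin n,
      ∑ D ∈ 𝒟, (if ∃ y, y ⋖ x ∧ D = {y, x} then ascentWeight n x else 0) = ascentWeight n x := by
    intro x
    by_cases hx : (x : ℕ) = 0
    · simp [ascentWeight, hx]
    set y : Fin n := ⟨x - 1, by omega⟩
    have hyx : y ⋖ x := Fin.covBy_iff.2 (Nat.covBy_iff_add_one_eq.2 (by simp only [y]; omega))
    have hiff : ∀ D : Finset (Fin n), (∃ y', y' ⋖ x ∧ D = {y', x}) ↔ D = {y, x} := fun D =>
      ⟨fun ⟨y', hy'x, hD⟩ => by rwa [hy'x.unique_left hyx] at hD, fun hD => ⟨y, hyx, hD⟩⟩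
    simp only [hiff, sum_ite_eq', if_pos (h2 _ (card_pair hyx.lt.ne))]
  simp only [bestWeight, hbest]
  rw [sum_comm]
  simp only [hcount]
  exact sum_ascentWeight n

theorem sum_bestWeight_pos_of_bottom_ascent {𝒟 : Finset (Finset (Fin n))}
    (h23 : ∀ D : Finset (Fin n), D.card = 2 ∨ D.card = 3 → D ∈ 𝒟) {σ : Fin n ≃ Fin n}
    {a b : Fin n} (ha : (a : ℕ) = 0) (hb : (b : ℕ) = 1) (hσab : σ a < σ b)
    (hmono : ¬StrictMono σ) : 0 < ∑ D ∈ 𝒟, bestWeight σ (separatingWeight n) D := by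
  have hab : a ⋖ b := Fin.covBy_iff.2 (by simp [ha, hb])
  have hn : 2 ≤ n := by have := b.isLt; omega
  obtain ⟨c, d, hcd, hσdc⟩ := exists_covBy_descent_of_not_strictMono σ.injective hmono
  obtain ⟨x, y, z, hyx, hxz, hσyx, hσzx⟩ := exists_peak_of_ascent_of_descent σ.injective
    hab hσab hcd hσdc (Fin.le_def.2 (by omega))
  have hT : ({y, x, z} : Finset (Fin n)).card = 3 :=
    card_eq_three.2 ⟨y, x, z, hyx.lt.ne, (hyx.lt.trans hxz.lt).ne, hxz.lt.ne, rfl⟩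
  refine sum_pos_of_add_pos (h23 _ (Or.inl (card_pair hab.lt.ne))) (h23 _ (Or.inr hT))
    (fun h => by rw [h, card_pair hab.lt.ne] at hT; omega)
    (fun D _ hD => le_bestWeight le_rfl fun _ _ => separatingWeight_nonneg ha hb (hD ·.1)) ?_
  rw [bestWeight_eq (isBest_triple hσyx hσzx), separatingWeight_triple hyx hxz]
  have : (2 - n : ℝ) ≤ bestWeight σ (separatingWeight n) {a, b} :=
    le_bestWeight (sub_nonpos.2 (by exact_mod_cast hn)) fun _ _ => two_sub_le_separatingWeight hn
  linarith

theorem sum_bestWeight_pos_of_bottom_descent {𝒟 : Finset (Finset (Fin n))}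
    (h2 : ∀ D : Finset (Fin n), D.card = 2 → D ∈ 𝒟) {σ : Fin n ≃ Fin n}
    {a b : Fin n} (ha : (a : ℕ) = 0) (hb : (b : ℕ) = 1) (hσba : σ b < σ a)
    (hanti : ¬StrictAnti σ) : 0 < ∑ D ∈ 𝒟, bestWeight σ (separatingWeight n) D := by
  obtain ⟨y, x, hyx, hσyx⟩ := exists_covBy_ascent_of_not_strictAnti σ.injective hanti
  have hx : (x : ℕ) ≠ 1 := fun hx => by
    obtain ⟨rfl, rfl⟩ := eq_of_covBy_of_val_eq_one ha hb hyx hx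
    exact hσba.not_gt hσyx
  have hnonneg : ∀ D ∈ 𝒟, 0 ≤ bestWeight σ (separatingWeight n) D := fun D _ =>
    le_bestWeight le_rfl fun x hbest => separatingWeight_nonneg ha hb fun ⟨hD, hxb⟩ => by
      subst hD hxb
      exact hσba.not_gt (hbest.2 a (mem_insert_self a _) (Fin.ne_of_val_ne (by omega)))
  calc (0 : ℝ) < bestWeight σ (separatingWeight n) {y, x} := by
        rw [bestWeight_eq (isBest_pair hσyx), separatingWeight_pair hyx, ascentWeight,
          if_neg (by have := val_add_one_of_covBy hyx; omega), if_neg hx]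
        exact one_pos
    _ ≤ _ := single_le_sum hnonneg (h2 _ (card_pair hyx.lt.ne))

theorem sum_bestWeight_pos {𝒟 : Finset (Finset (Fin n))}
    (h23 : ∀ D : Finset (Fin n), D.card = 2 ∨ D.card = 3 → D ∈ 𝒟) {σ : Fin n ≃ Fin n}
    (hmono : ¬StrictMono σ) (hanti : ¬StrictAnti σ) :
    0 < ∑ D ∈ 𝒟, bestWeight σ (separatingWeight n) D := by
  obtain ⟨c, d, hcd, -⟩ := exists_covBy_descent_of_not_strictMono σ.injective hmono
  have hn : 1 < n := by have := val_add_one_of_covBy hcd; omega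
  have hab : (⟨0, by omega⟩ : Fin n) ≠ ⟨1, hn⟩ := by simp
  rcases lt_or_gt_of_ne (σ.injective.ne hab) with hσab | hσba
  · exact sum_bestWeight_pos_of_bottom_ascent h23 rfl rfl hσab hmono
  · exact sum_bestWeight_pos_of_bottom_descent (fun D hD => h23 D (Or.inl hD)) rfl rfl hσba hanti

end Weight

end RandomUtility

open RandomUtility in
theorem rho_reverse_adjacent_general (n : ℕ) (𝒟 : Finset (Finset (Fin n)))
    (h23 : ∀ D : Finset (Fin n), D.card = 2 ∨ D.card = 3 → D ∈ 𝒟) :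
    ∃ (t : ({D : Finset (Fin n) // D ∈ 𝒟} × Fin n) → ℝ) (a : ℝ),
      (∑ i, rhoVec 𝒟 (Fin.revPerm : Fin n ≃ Fin n) i * t i) = a ∧
      (∑ i, rhoVec 𝒟 (Equiv.refl (Fin n)) i * t i) = a ∧
      ∀ σ : Fin n ≃ Fin n, σ ≠ (Fin.revPerm : Fin n ≃ Fin n) → σ ≠ Equiv.refl (Fin n) →
        a < ∑ i, rhoVec 𝒟 σ i * t i := by
  refine ⟨fun q => separatingWeight n q.1.1 q.2, 0, ?_, ?_, fun σ hrev hrefl => ?_⟩ <;>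
    rw [sum_rhoVec_mul]
  · exact sum_eq_zero fun D _ => bestWeight_eq_zero fun x hx =>
      separatingWeight_of_least ((isBest_iff_of_strictAnti Fin.rev_strictAnti).1 hx).2
  · exact sum_bestWeight_refl fun D hD => h23 D (Or.inl hD)
  · refine sum_bestWeight_pos h23 (fun hσ => hrefl (Equiv.ext (congrFun hσ.eq_id)))
      fun hσ => hrev (Equiv.ext fun x => ?_)
    simpa [Fin.rev_eq_iff] using congrFun (Fin.rev_strictAnti.comp hσ).eq_id x

/-- Adjacency of a ranking and its reverse: with `X = Fin n` (`n ≥ 3`), `π = Fin.revPerm`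
(so `π(x_i) > π(x_{i+1})`) and its reverse `π⁻ = Equiv.refl`, there is a linear functional
`t` taking the common value `a` at `ρ^π` and `ρ^{π⁻}` and a strictly larger value at every
other ranking's vertex. -/
theorem rho_reverse_adjacent (n : ℕ) (hn : 3 ≤ n) (𝒟 : Finset (Finset (Fin n)))
    (h23 : ∀ D : Finset (Fin n), D.card = 2 ∨ D.card = 3 → D ∈ 𝒟) :
    ∃ (t : ({D : Finset (Fin n) // D ∈ 𝒟} × Fin n) → ℝ) (a : ℝ),
      (∑ i, rhoVec 𝒟 (Fin.revPerm : Fin n ≃ Fin n) i * t i) = a ∧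
      (∑ i, rhoVec 𝒟 (Equiv.refl (Fin n)) i * t i) = a ∧
      ∀ σ : Fin n ≃ Fin n, σ ≠ (Fin.revPerm : Fin n ≃ Fin n) → σ ≠ Equiv.refl (Fin n) →
        a < ∑ i, rhoVec 𝒟 σ i * t i :=
  rho_reverse_adjacent_general n 𝒟 h23
end

section
/- Greedy approximation rate: let H be a compact convex subset of ℝ^N equal to the closed convex hull of a set S, and let ρ̂ ∈ ℝ^N. Define ρ* as the point of H closest to ρ̂ in Euclidean norm, and suppose ρ* = Σ_{i=1}^M λ_i ρ_i with λ_i ≥ 0, Σλ_i = 1, ρ_i ∈ S. Define a sequence: ρ^1 minimizes ‖ρ̂ − ρ‖² over ρ ∈ cl(S); at step n ≥ 2, with α_n = 2/(n+1), ρ^n = (1−α_n*)ρ^{n−1} + α_n* ρ_n* where (α_n*, ρ_n*) minimizes ‖ρ̂ − (1−α)ρ^{n−1} − αρ‖² over α ∈ {2/(k+1) : 1 ≤ k ≤ n} and ρ ∈ cl(S). Set E_n = ‖ρ̂ − ρ^n‖² − ‖ρ̂ − ρ*‖² and C = Σ_i λ_i ‖ρ_i − ρ*‖², T = max{2E_1,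 4C}. Then E_n ≤ T/(n+1) for all n ≥ 1. -/
open scoped RealInnerProductSpace


private lemma greedy_rate_aux (s T C : ℝ) (hn1 : 1 ≤ s) (hTC : 4*C ≤ T) (hT0 : 0 ≤ T) :
    (1 - 2/(s+2)) * (T/(s+1)) + (2/(s+2))^2 * C ≤ T/(s+1+1) := by
  have h3 : (0:ℝ) < s+2 := by linarith
  have hLHS : (1 - 2/(s+2)) * (T/(s+1)) + (2/(s+2))^2 * C
      = (s*T*(s+2) + 4*C*(s+1)) / ((s+1)*(s+2)^2) := by
    field_simp
    ring
  rw [show s+1+1 = s+2 by ring, hLHS, div_le_div_iff₀ (by positivity) h3]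
  have h5 : 4*C*((s+1)*(s+2)) ≤ T*((s+1)*(s+2)) :=
    mul_le_mul_of_nonneg_right hTC (by positivity)
  have h6 : (0:ℝ) ≤ T*(s+2) := mul_nonneg hT0 h3.le
  nlinarith [h5, h6]

/-- Convergence rate of the greedy algorithm: with `ρ*` the projection of `ρ̂` onto the
compact convex set `cl (co S)`, written as a convex combination `Σ λᵢ ρᵢ` of points of `S`,
and a greedy sequence `seq` as described, the error `E n = ‖ρ̂ - seq n‖² - ‖ρ̂ - ρ*‖²`
satisfies `E n ≤ T / (n + 1)` with `T = max (2 E₁) (4 C)`, `C = Σ λᵢ ‖ρᵢ - ρ*‖²`. -/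
theorem greedy_rate {N M : ℕ} (S : Set (EuclideanSpace ℝ (Fin N)))
    (hScomp : IsCompact (closure (convexHull ℝ S)))
    (ρhat ρstar : EuclideanSpace ℝ (Fin N))
    (hmem : ρstar ∈ closure (convexHull ℝ S))
    (hproj : ∀ h ∈ closure (convexHull ℝ S), ‖ρhat - ρstar‖ ≤ ‖ρhat - h‖)
    (lam : Fin M → ℝ) (ρ : Fin M → EuclideanSpace ℝ (Fin N))
    (hlam : ∀ i, 0 ≤ lam i) (hsum : ∑ i, lam i = 1) (hρS : ∀ i, ρ i ∈ S)
    (hrep : ρstar = ∑ i, lam i • ρ i)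
    (seq : ℕ → EuclideanSpace ℝ (Fin N))
    (h1mem : seq 1 ∈ closure S)
    (h1min : ∀ q ∈ closure S, ‖ρhat - seq 1‖ ^ 2 ≤ ‖ρhat - q‖ ^ 2)
    (hstepmem : ∀ n : ℕ, 2 ≤ n →
      ∃ α ∈ (fun k : ℕ => (2 : ℝ) / (k + 1)) '' (Set.Icc 1 n),
        ∃ q ∈ closure S, seq n = (1 - α) • seq (n - 1) + α • q)
    (hstepmin : ∀ n : ℕ, 2 ≤ n →
      ∀ α ∈ (fun k : ℕ => (2 : ℝ) / (k + 1)) '' (Set.Icc 1 n), ∀ q ∈ closure S,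
        ‖ρhat - seq n‖ ^ 2 ≤ ‖ρhat - ((1 - α) • seq (n - 1) + α • q)‖ ^ 2) :
    ∀ n : ℕ, 1 ≤ n →
      ‖ρhat - seq n‖ ^ 2 - ‖ρhat - ρstar‖ ^ 2 ≤
        (max (2 * (‖ρhat - seq 1‖ ^ 2 - ‖ρhat - ρstar‖ ^ 2))
             (4 * ∑ i, lam i * ‖ρ i - ρstar‖ ^ 2)) / ((n : ℝ) + 1) := by
  have hC0 : (0:ℝ) ≤ ∑ i, lam i * ‖ρ i - ρstar‖ ^ 2 :=
    Finset.sum_nonneg fun i _ => mul_nonneg (hlam i) (by positivity)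
  set C := ∑ i, lam i * ‖ρ i - ρstar‖ ^ 2 with hC
  set T := max (2 * (‖ρhat - seq 1‖ ^ 2 - ‖ρhat - ρstar‖ ^ 2)) (4 * C) with hT
  have hTC : 4 * C ≤ T := le_max_right _ _
  have hT0 : (0:ℝ) ≤ T := le_trans (by linarith) hTC
  have hT1 : 2 * (‖ρhat - seq 1‖ ^ 2 - ‖ρhat - ρstar‖ ^ 2) ≤ T := le_max_left _ _
  clear_value T
  have hCdef : C = ∑ i, lam i * ‖ρ i - ρstar‖ ^ 2 := hC
  have key : ∀ n : ℕ, 1 ≤ n →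
      ‖ρhat - seq (n+1)‖ ^ 2 ≤
        (1 - 2/((n:ℝ)+2)) * ‖ρhat - seq n‖ ^ 2 + (2/((n:ℝ)+2)) * ‖ρhat - ρstar‖ ^ 2
          + (2/((n:ℝ)+2))^2 * C := by
    intro n hn
    have hn1 : (1:ℝ) ≤ (n:ℝ) := by exact_mod_cast hn
    set α : ℝ := 2/((n:ℝ)+2) with hα
    have hα0 : 0 ≤ α := by positivity
    have hα1 : α ≤ 1 := by
      rw [hα, div_le_one (by linarith)]; linarith
    have hmem' : α ∈ (fun k : ℕ => (2:ℝ)/(k+1)) '' Set.Icc 1 (n+1) := by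
      refine ⟨n+1, ⟨by omega, le_refl _⟩, ?_⟩
      push_cast; rw [hα]; ring_nf
    have hstep := hstepmin (n+1) (by omega)
    simp only [Nat.add_sub_cancel] at hstep
    set p := seq n with hp
    set z := ρhat - ((1-α) • p + α • ρstar) with hz
    have hmin : ∀ i, ‖ρhat - seq (n+1)‖^2 ≤ ‖ρhat - ((1-α) • p + α • ρ i)‖^2 :=
      fun i => hstep α hmem' (ρ i) (subset_closure (hρS i))
    have hv : ∀ q : EuclideanSpace ℝ (Fin N),
        ρhat - ((1-α) • p + α • q) = z - α • (q - ρstar) := by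
      intro q; rw [hz]; module
    have hexp : ∀ q : EuclideanSpace ℝ (Fin N),
        ‖ρhat - ((1-α) • p + α • q)‖^2
          = ‖z‖^2 - 2*α*⟪z, q - ρstar⟫ + α^2 * ‖q - ρstar‖^2 := by
      intro q
      rw [hv q, norm_sub_sq_real, real_inner_smul_right, norm_smul, Real.norm_eq_abs, mul_pow, sq_abs]
      ring
    have hzero : ∑ i, lam i • (ρ i - ρstar) = 0 := by
      simp only [smul_sub]
      rw [Finset.sum_sub_distrib, ← Finset.sum_smul, hsum, one_smul, ← hrep, sub_self]
    have hinz : ∑ i, lam i * ⟪z, ρ i - ρstar⟫ = 0 := by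
      have h0 : ⟪z, ∑ i, lam i • (ρ i - ρstar)⟫ = 0 := by rw [hzero, inner_zero_right]
      rw [inner_sum] at h0
      simp only [real_inner_smul_right] at h0
      exact h0
    have h3 : ∑ i, lam i * ‖ρhat - ((1-α) • p + α • ρ i)‖^2 = ‖z‖^2 + α^2 * C := by
      rw [Finset.sum_congr rfl fun i _ => by rw [hexp (ρ i)]]
      have : ∀ i, lam i * (‖z‖^2 - 2*α*⟪z, ρ i - ρstar⟫ + α^2 * ‖ρ i - ρstar‖^2)
          = lam i * ‖z‖^2 - 2*α*(lam i * ⟪z, ρ i - ρstar⟫)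
            + α^2 * (lam i * ‖ρ i - ρstar‖^2) := fun i => by ring
      simp only [this]
      rw [Finset.sum_add_distrib, Finset.sum_sub_distrib, ← Finset.sum_mul, hsum, one_mul,
        ← Finset.mul_sum, hinz, ← Finset.mul_sum, ← hC]
      ring
    have havg : ‖ρhat - seq (n+1)‖^2 ≤ ‖z‖^2 + α^2 * C := by
      calc ‖ρhat - seq (n+1)‖^2 = ∑ i, lam i * ‖ρhat - seq (n+1)‖^2 := by
            rw [← Finset.sum_mul, hsum, one_mul]
        _ ≤ ∑ i, lam i * ‖ρhat - ((1-α) • p + α • ρ i)‖^2 :=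
            Finset.sum_le_sum fun i _ => mul_le_mul_of_nonneg_left (hmin i) (hlam i)
        _ = ‖z‖^2 + α^2 * C := h3
    have hconv : ‖z‖^2 ≤ (1-α) * ‖ρhat - p‖^2 + α * ‖ρhat - ρstar‖^2 := by
      have hz2 : z = (1-α) • (ρhat - p) + α • (ρhat - ρstar) := by rw [hz]; module
      have h1α : 0 ≤ 1 - α := by linarith
      rw [hz2, norm_add_sq_real, real_inner_smul_left, real_inner_smul_right,
        norm_smul, norm_smul, Real.norm_eq_abs, Real.norm_eq_abs,
        abs_of_nonneg h1α, abs_of_nonneg hα0]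
      have hi := real_inner_le_norm (ρhat - p) (ρhat - ρstar)
      nlinarith [mul_nonneg (mul_nonneg h1α hα0) (sq_nonneg (‖ρhat - p‖ - ‖ρhat - ρstar‖)),
        mul_le_mul_of_nonneg_left hi (mul_nonneg h1α hα0)]
    linarith
  intro n hn
  induction n, hn using Nat.le_induction with
  | base =>
      push_cast
      linarith
  | succ n hn ih =>
      have hn1 : (1:ℝ) ≤ (n:ℝ) := by exact_mod_cast hn
      have hk := key n hn
      push_cast
      push_cast at ih
      set s : ℝ := (n:ℝ) with hs
      clear_value s
      clear_value C
      have h2 : (0:ℝ) < s + 1 := by linarith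
      have h3 : (0:ℝ) < s + 2 := by linarith
      have hA : ‖ρhat - seq (n+1)‖^2 - ‖ρhat - ρstar‖^2 ≤
          (1 - 2/(s+2)) * (‖ρhat - seq n‖^2 - ‖ρhat - ρstar‖^2) + (2/(s+2))^2 * C := by
        have : (1 - 2/(s+2)) * ‖ρhat - seq n‖^2 + (2/(s+2)) * ‖ρhat - ρstar‖^2
            - ‖ρhat - ρstar‖^2
            = (1 - 2/(s+2)) * (‖ρhat - seq n‖^2 - ‖ρhat - ρstar‖^2) := by ring
        linarith
      have h1α : 0 ≤ 1 - 2/(s+2) := by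
        rw [sub_nonneg, div_le_one h3]; linarith
      have hB : (1 - 2/(s+2)) * (‖ρhat - seq n‖^2 - ‖ρhat - ρstar‖^2)
          ≤ (1 - 2/(s+2)) * (T/(s+1)) := mul_le_mul_of_nonneg_left ih h1α
      have hfin : (1 - 2/(s+2)) * (T/(s+1)) + (2/(s+2))^2 * C ≤ T/(s+1+1) :=
        greedy_rate_aux s T C hn1 hTC hT0
      linarith only [hA, hB, hfin]
end

section
/- Theorem of the alternative: let A be an r×n real matrix, B an l×n real matrix, and E an m×n real matrix. Exactly one of the following holds: (1) there exists u ∈ ℝ^n with A u = 0, B u ≥ 0 (componentwise) and E u ≫ 0 (all components strictly positive); (2) there exist θ ∈ ℝ^r, η ∈ ℝ^l with η ≥ 0, and λ ∈ ℝ^m with λ ≥ 0, λ ≠ 0, such that Aᵀθ + Bᵀη + Eᵀλ = 0. -/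
/-!
Normalising `∑ λ = 1`, system (2) says that `(0, 1) ∈ ℝⁿ × ℝ` is a conic combination of
`(±Aᵢ, 0)`, `(-Bₖ, 0)` and `(0, 1) - (Eⱼ, 0)`. By Farkas' lemma, either it is, or some linear
functional `(x, t) ↦ u ⬝ᵥ x + t s` is `≤ 0` on these generators and `> 0` at `(0, 1)`, and such
a `u` solves (1). Farkas' lemma itself goes by induction on the number of generators: if the
functional `f` separating `b` from the first ones is positive on the new generator `a`, project
everything along `a` onto `ker f` and separate again. The two systems exclude each other because
pairing `Aᵀθ + Bᵀη + Eᵀλ = 0` with a solution `u` of (1) gives `0 = η ⬝ᵥ Bu + λ ⬝ᵥ Eu > 0`.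
-/

open Set Module

namespace PointedCone

variable {𝕜 V : Type*} [Field 𝕜] [LinearOrder 𝕜] [IsStrictOrderedRing 𝕜]
  [AddCommGroup V] [Module 𝕜 V]

theorem mem_hull_insert_or_exists_dual {α : Type*} (w : α → V) (a b : V)
    (ih : ∀ (w' : α → V) (b' : V),
      b' ∈ hull 𝕜 (range w') ∨ ∃ f : Dual 𝕜 V, (∀ i, f (w' i) ≤ 0) ∧ 0 < f b') :
    b ∈ hull 𝕜 (insert a (range w)) ∨
      ∃ f : Dual 𝕜 V, f a ≤ 0 ∧ (∀ i, f (w i) ≤ 0) ∧ 0 < f b := by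
  obtain hb | ⟨f, hfw, hfb⟩ := ih w b
  · exact .inl (Submodule.span_mono (subset_insert _ _) hb)
  obtain hfa | hfa := le_or_gt (f a) 0
  · exact .inr ⟨f, hfa, hfw, hfb⟩
  let P : V →ₗ[𝕜] V := LinearMap.id - ((f a)⁻¹ • f).smulRight a
  have hP : ∀ x, x = P x + (f x / f a) • a := fun x => by simp [P, div_eq_inv_mul]
  have hPa : P a = 0 := by simp [P, hfa.ne']
  have ha : a ∈ hull 𝕜 (insert a (range w)) := subset_hull (mem_insert a _)
  obtain hPb | ⟨g, hgw, hgb⟩ := ih (P ∘ w) (P b)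
  · have hPw : hull 𝕜 (range (P ∘ w)) ≤ hull 𝕜 (insert a (range w)) := by
      refine Submodule.span_le.2 ?_
      rintro _ ⟨i, rfl⟩
      have hcoef : 0 ≤ -(f (w i) / f a) :=
        neg_nonneg.2 (div_nonpos_of_nonpos_of_nonneg (hfw i) hfa.le)
      have hPwi : P (w i) = w i + -(f (w i) / f a) • a := by
        rw [neg_smul, ← sub_eq_add_neg, eq_sub_iff_add_eq, ← hP]
      rw [Function.comp_apply, hPwi]
      exact add_mem (subset_hull (mem_insert_of_mem _ (mem_range_self i))) (smul_mem _ hcoef ha)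
    rw [hP b]
    exact .inl (add_mem (hPw hPb) (smul_mem _ (div_pos hfb hfa).le ha))
  · exact .inr ⟨g ∘ₗ P, by simp [hPa], hgw, hgb⟩

theorem mem_hull_range_or_exists_dual {ι : Type*} [Finite ι] (v : ι → V) (b : V) :
    b ∈ hull 𝕜 (range v) ∨ ∃ f : Dual 𝕜 V, (∀ i, f (v i) ≤ 0) ∧ 0 < f b := by
  induction ι using Finite.induction_empty_option generalizing b with
  | of_equiv e ih =>
    obtain hb | ⟨f, hf, hfb⟩ := ih (v ∘ e) b
    · exact .inl (by rwa [e.surjective.range_comp] at hb)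
    · exact .inr ⟨f, e.forall_congr_right.1 hf, hfb⟩
  | h_empty =>
    by_cases hb : b = 0
    · exact .inl (hb ▸ zero_mem _)
    obtain ⟨f, hf⟩ := Projective.exists_dual_eq_one 𝕜 hb
    exact .inr ⟨f, fun i => i.elim, hf ▸ one_pos⟩
  | h_option ih =>
    rw [Option.range_eq]
    obtain hb | ⟨f, hfa, hfw, hfb⟩ := mem_hull_insert_or_exists_dual (v ∘ some) (v none) b ih
    · exact .inl hb
    · exact .inr ⟨f, Option.forall.2 ⟨hfa, hfw⟩, hfb⟩

end PointedCone

namespace Matrix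

variable {𝕜 : Type*} [Field 𝕜] [LinearOrder 𝕜] [IsStrictOrderedRing 𝕜] {ι κ μ ν : Type*}
  (A : Matrix ι ν 𝕜) (B : Matrix κ ν 𝕜) (E : Matrix μ ν 𝕜)

def MotzkinPrimal [Fintype ν] : Prop :=
  ∃ u : ν → 𝕜, A *ᵥ u = 0 ∧ (∀ i, 0 ≤ (B *ᵥ u) i) ∧ ∀ i, 0 < (E *ᵥ u) i

def MotzkinDual [Fintype ι] [Fintype κ] [Fintype μ] : Prop :=
  ∃ (θ : ι → 𝕜) (η : κ → 𝕜) (lam : μ → 𝕜), (∀ i, 0 ≤ η i) ∧ (∀ i, 0 ≤ lam i) ∧ lam ≠ 0 ∧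
    Aᵀ *ᵥ θ + Bᵀ *ᵥ η + Eᵀ *ᵥ lam = 0

def motzkinGenerators : (ι ⊕ ι) ⊕ (κ ⊕ μ) → (ν → 𝕜) × 𝕜 :=
  Sum.elim (Sum.elim (fun i => (A i, 0)) (fun i => -(A i, 0)))
    (Sum.elim (fun k => -(B k, 0)) (fun j => (0, 1) - (E j, 0)))

theorem motzkinDual_of_mem_hull [Fintype ι] [Fintype κ] [Fintype μ]
    (h : ((0 : ν → 𝕜), (1 : 𝕜)) ∈ PointedCone.hull 𝕜 (range (motzkinGenerators A B E))) :
    MotzkinDual A B E := by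
  obtain ⟨c, hc⟩ := (Submodule.mem_span_range_iff_exists_fun _).1 h
  have hfst := congrArg Prod.fst hc
  have hsnd := congrArg Prod.snd hc
  rw [Prod.fst_sum] at hfst
  rw [Prod.snd_sum] at hsnd
  simp only [motzkinGenerators, Fintype.sum_sum_type, Sum.elim_inl, Sum.elim_inr, Prod.smul_fst,
    Prod.smul_snd, Prod.fst_neg, Prod.snd_neg, Prod.fst_sub, Prod.snd_sub, smul_neg,
    ← Nonneg.coe_smul, neg_zero, sub_zero, zero_sub, Finset.sum_neg_distrib, smul_eq_mul,
    mul_one] at hfst hsnd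
  refine ⟨fun i => c (.inl (.inr i)) - c (.inl (.inl i)), fun k => c (.inr (.inl k)),
    fun j => c (.inr (.inr j)), fun _ => (c _).2, fun _ => (c _).2, ?_, ?_⟩
  · intro hlam
    simp [hlam] at hsnd
  · simp only [mulVec_transpose, vecMul_eq_sum, sub_smul, Finset.sum_sub_distrib]
    linear_combination (norm := module) -hfst

theorem motzkinPrimal_of_dual [Fintype ν] (f : Dual 𝕜 ((ν → 𝕜) × 𝕜))
    (hf : ∀ i, f (motzkinGenerators A B E i) ≤ 0) (hf₁ : 0 < f (0, 1)) :
    MotzkinPrimal A B E := by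
  classical
  set u := (dotProductEquiv 𝕜 ν).symm (f ∘ₗ LinearMap.inl 𝕜 _ 𝕜)
  have hu : ∀ x, x ⬝ᵥ u = f (x, 0) := fun x => by
    rw [dotProduct_comm, ← dotProductEquiv_apply_apply, LinearEquiv.apply_symm_apply]
    rfl
  simp only [motzkinGenerators, Sum.forall, Sum.elim_inl, Sum.elim_inr, map_neg, map_sub,
    neg_nonpos, sub_nonpos] at hf
  refine ⟨u, funext fun i => ?_, fun k => ?_, fun j => ?_⟩
  · exact le_antisymm ((hu _).trans_le (hf.1.1 i)) ((hf.1.2 i).trans_eq (hu _).symm)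
  · exact (hf.2.1 k).trans_eq (hu _).symm
  · exact (hf₁.trans_le (hf.2.2 j)).trans_eq (hu _).symm

theorem not_motzkinPrimal_and_motzkinDual [Fintype ι] [Fintype κ] [Fintype μ] [Fintype ν] :
    ¬(MotzkinPrimal A B E ∧ MotzkinDual A B E) := by
  rintro ⟨⟨u, hAu, hBu, hEu⟩, θ, η, lam, hη, hlam, hlam₀, hsum⟩
  have hpairing : θ ⬝ᵥ (A *ᵥ u) + η ⬝ᵥ (B *ᵥ u) + lam ⬝ᵥ (E *ᵥ u) = 0 := by
    simpa only [dotProduct_mulVec, ← mulVec_transpose, add_dotProduct, zero_dotProduct]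
      using congrArg (· ⬝ᵥ u) hsum
  have hB : 0 ≤ η ⬝ᵥ (B *ᵥ u) := dotProduct_nonneg_of_nonneg hη hBu
  have hE : 0 < lam ⬝ᵥ (E *ᵥ u) := by
    obtain ⟨j, hj⟩ := Function.ne_iff.1 hlam₀
    exact Finset.sum_pos' (fun i _ => mul_nonneg (hlam i) (hEu i).le)
      ⟨j, Finset.mem_univ j, mul_pos ((hlam j).lt_of_ne' hj) (hEu j)⟩
  rw [hAu, dotProduct_zero, zero_add] at hpairing
  linarith

theorem motzkinPrimal_or_motzkinDual [Fintype ι] [Fintype κ] [Fintype μ] [Fintype ν] :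
    MotzkinPrimal A B E ∨ MotzkinDual A B E := by
  obtain h | ⟨f, hf, hf₁⟩ := PointedCone.mem_hull_range_or_exists_dual (𝕜 := 𝕜)
    (motzkinGenerators A B E) ((0 : ν → 𝕜), (1 : 𝕜))
  · exact .inr (motzkinDual_of_mem_hull A B E h)
  · exact .inl (motzkinPrimal_of_dual A B E f hf hf₁)

end Matrix

/-- Motzkin-type theorem of the alternative (Stoer–Witzgall 1.6.1): exactly one of the
two systems has a solution. -/
theorem theorem_of_the_alternative (r l m n : ℕ)
    (A : Matrix (Fin r) (Fin n) ℝ) (B : Matrix (Fin l) (Fin n) ℝ)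
    (E : Matrix (Fin m) (Fin n) ℝ) :
    Xor'
      (∃ u : Fin n → ℝ, A.mulVec u = 0 ∧ (∀ i, 0 ≤ B.mulVec u i) ∧
        ∀ i, 0 < E.mulVec u i)
      (∃ (θ : Fin r → ℝ) (η : Fin l → ℝ) (lam : Fin m → ℝ),
        (∀ i, 0 ≤ η i) ∧ (∀ i, 0 ≤ lam i) ∧ lam ≠ 0 ∧
        A.transpose.mulVec θ + B.transpose.mulVec η + E.transpose.mulVec lam = 0) :=
  (xor_iff_or_and_not_and _ _).2
    ⟨A.motzkinPrimal_or_motzkinDual B E, A.not_motzkinPrimal_and_motzkinDual B E⟩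
end

section
/- Let μ be a probability measure on ℝ^X (X finite) with a density whose support is open, convex, and contains 0, and suppose for each x ∈ X a sequence of utilities u_n(x) ∈ ℝ satisfies: for all distinct x, y ∈ X with π(x) > π(y) (π a fixed ranking), u_n(x) − u_n(y) → +∞. Then for every D ⊆ X with x ∈ D, μ({ε : u_n(x) + ε(x) > u_n(y) + ε(y) for all y ∈ D \ {x}}) → 1 if x is the π-best element of D, and → 0 otherwise. -/
/-!
The event that `x` is chosen from `D` contains the event that every shock difference
`ε y - ε x` (`y ∈ D`, `y ≠ x`) stays below the utility gap `u n x - u n y`. The law of each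
shock difference does not depend on `n` while the gaps tend to `+∞`, so by continuity of `μ`
from above and a union bound over the finitely many `y`, that event has probability tending
to `1` when `x` is `π`-best. Otherwise some `y ∈ D` beats `x`, and choosing `x` forces
`ε x - ε y > u n y - u n x → +∞`, an event of vanishing probability.
-/

open MeasureTheory Filter Topology

section

variable {α : Type*} [MeasurableSpace α] {μ : Measure α}

lemma tendsto_measure_setOf_le_atTop [IsFiniteMeasure μ] {g : α → ℝ}
    (hg : AEMeasurable g μ) : Tendsto (fun t => μ {a | t ≤ g a}) atTop (𝓝 0) := by
  have hempty : ⋂ t : ℝ, {a | t ≤ g a} = ∅ :=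
    Set.eq_empty_of_forall_notMem fun a ha =>
      (lt_add_one (g a)).not_ge (Set.mem_iInter.mp ha (g a + 1))
  have := tendsto_measure_iInter_atTop (s := fun t : ℝ => {a | t ≤ g a})
    (fun t => hg.nullMeasurableSet_preimage measurableSet_Ici)
    (fun s t hst a ha => hst.trans ha) ⟨0, measure_ne_top μ _⟩
  rwa [hempty, measure_empty] at this

lemma tendsto_measureReal_setOf_le [IsFiniteMeasure μ] {ι : Type*} {l : Filter ι}
    {g : α → ℝ} (hg : AEMeasurable g μ) {c : ι → ℝ} (hc : Tendsto c l atTop) :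
    Tendsto (fun i => μ.real {a | c i ≤ g a}) l (𝓝 0) :=
  (ENNReal.tendsto_toReal ENNReal.zero_ne_top).comp
    ((tendsto_measure_setOf_le_atTop hg).comp hc)

lemma tendsto_measureReal_exists_le [IsFiniteMeasure μ] {ι κ : Type*} {l : Filter ι}
    (s : Finset κ) {g : κ → α → ℝ} (hg : ∀ k ∈ s, AEMeasurable (g k) μ)
    {c : ι → κ → ℝ} (hc : ∀ k ∈ s, Tendsto (fun i => c i k) l atTop) :
    Tendsto (fun i => μ.real {a | ∃ k ∈ s, c i k ≤ g k a}) l (𝓝 0) := by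
  have hsum := tendsto_finsetSum s fun k hk => tendsto_measureReal_setOf_le (hg k hk) (hc k hk)
  rw [Finset.sum_const_zero] at hsum
  refine squeeze_zero (fun i => measureReal_nonneg) (fun i => ?_) hsum
  calc μ.real {a | ∃ k ∈ s, c i k ≤ g k a}
      = μ.real (⋃ k ∈ s, {a | c i k ≤ g k a}) := by congr 1; ext; simp
    _ ≤ _ := measureReal_biUnion_finset_le _ _

lemma tendsto_measureReal_forall_lt [IsProbabilityMeasure μ] {ι κ : Type*} {l : Filter ι}
    (s : Finset κ) {g : κ → α → ℝ} (hg : ∀ k ∈ s, AEMeasurable (g k) μ)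
    {c : ι → κ → ℝ} (hc : ∀ k ∈ s, Tendsto (fun i => c i k) l atTop) :
    Tendsto (fun i => μ.real {a | ∀ k ∈ s, g k a < c i k}) l (𝓝 1) := by
  have hcompl : ∀ i, {a | ∀ k ∈ s, g k a < c i k} = {a | ∃ k ∈ s, c i k ≤ g k a}ᶜ := by
    intro i; ext; simp
  have hmeas : ∀ i, NullMeasurableSet {a | ∃ k ∈ s, c i k ≤ g k a} μ := by
    intro i
    convert NullMeasurableSet.biUnion s.countable_toSet
      fun k hk => (hg k hk).nullMeasurableSet_preimage (measurableSet_Ici (a := c i k)) using 1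
    ext; simp
  simp_rw [hcompl, probReal_compl_eq_one_sub₀ (hmeas _)]
  simpa using (tendsto_measureReal_exists_le s hg hc).const_sub 1

end

theorem shock_choice_prob_tendsto_general {X : Type*} [Fintype X]
    (μ : Measure (X → ℝ)) [IsProbabilityMeasure μ]
    (π : X ≃ Fin (Fintype.card X)) (u : ℕ → X → ℝ)
    (hu : ∀ x y : X, π y < π x → Tendsto (fun n => u n x - u n y) atTop atTop) :
    ∀ D : Finset X, ∀ x ∈ D,
      ((∀ y ∈ D, y ≠ x → π y < π x) →
        Tendsto (fun n =>
            (μ {ε : X → ℝ | ∀ y ∈ D, y ≠ x → u n y + ε y < u n x + ε x}).toReal)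
          atTop (nhds 1)) ∧
      (¬ (∀ y ∈ D, y ≠ x → π y < π x) →
        Tendsto (fun n =>
            (μ {ε : X → ℝ | ∀ y ∈ D, y ≠ x → u n y + ε y < u n x + ε x}).toReal)
          atTop (nhds 0)) := by
  classical
  intro D x _
  constructor
  · intro hbest
    have hset : ∀ n, {ε : X → ℝ | ∀ y ∈ D, y ≠ x → u n y + ε y < u n x + ε x} =
        {ε | ∀ y ∈ D.erase x, ε y - ε x < u n x - u n y} := by
      intro n
      ext ε
      constructor
      · intro h y hy
        linarith [h y (Finset.mem_of_mem_erase hy) (Finset.ne_of_mem_erase hy)]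
      · intro h y hyD hyx
        linarith [h y (Finset.mem_erase.mpr ⟨hyx, hyD⟩)]
    simp_rw [hset]
    exact tendsto_measureReal_forall_lt _ (fun y _ => by fun_prop)
      fun y hy => hu x y (hbest y (Finset.mem_of_mem_erase hy) (Finset.ne_of_mem_erase hy))
  · intro hnot
    push Not at hnot
    obtain ⟨y, hyD, hyx, hxy⟩ := hnot
    have hπ : π x < π y := hxy.lt_of_ne (π.injective.ne hyx.symm)
    refine squeeze_zero (fun n => measureReal_nonneg) (fun n => measureReal_mono fun ε hε => ?_)
      (tendsto_measureReal_setOf_le (g := fun ε : X → ℝ => ε x - ε y) (by fun_prop) (hu y x hπ))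
    have := hε y hyD hyx
    show u n y - u n x ≤ ε x - ε y
    linarith

/-- If utility differences diverge consistently with a ranking `π`, the additive-shock
choice probabilities converge to the deterministic choice function `ρ^π`: for `x ∈ D`,
they tend to `1` if `x` is `π`-best in `D` and to `0` otherwise. Here `μ` is a Borel
probability measure on `ℝ^X` with a density whose support is open, convex and
contains `0`. -/
theorem shock_choice_prob_tendsto {X : Type*} [Fintype X]
    (μ : Measure (X → ℝ)) [IsProbabilityMeasure μ]
    (f : (X → ℝ) → ENNReal) (hμ : μ = volume.withDensity f)
    (hopen : IsOpen {ε : X → ℝ | f ε ≠ 0})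
    (hconv : Convex ℝ {ε : X → ℝ | f ε ≠ 0})
    (h0 : f 0 ≠ 0)
    (π : X ≃ Fin (Fintype.card X)) (u : ℕ → X → ℝ)
    (hu : ∀ x y : X, π y < π x → Tendsto (fun n => u n x - u n y) atTop atTop) :
    ∀ D : Finset X, ∀ x ∈ D,
      ((∀ y ∈ D, y ≠ x → π y < π x) →
        Tendsto (fun n =>
            (μ {ε : X → ℝ | ∀ y ∈ D, y ≠ x → u n y + ε y < u n x + ε x}).toReal)
          atTop (nhds 1)) ∧
      (¬ (∀ y ∈ D, y ≠ x → π y < π x) →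
        Tendsto (fun n =>
            (μ {ε : X → ℝ | ∀ y ∈ D, y ≠ x → u n y + ε y < u n x + ε x}).toReal)
          atTop (nhds 0)) :=
  shock_choice_prob_tendsto_general μ π u hu
end

section
/- Let X be finite, p: X → ℝ^K, and suppose there exist sequences β_n, β′_n ∈ ℝ^K and a fixed vector η ∈ ℝ^X such that for all x, y ∈ X with π(x) > π(y): eventually β_n·p(x) + η(x) > β_n·p(y) + η(y), and eventually β′_n·p(y) + η(y) > β′_n·p(x) + η(x). Then there exists β ∈ ℝ^K with β·p(x) > β·p(y) whenever π(x) > π(y); i.e., π is representable over the features p. -/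
open Filter

/-- If a ranking `π` and its reverse are both eventually represented (with common fixed
effects `η`) by sequences `β_n` and `β'_n`, then `π` is representable over the features
`p` (take `β = β_n - β'_n` for large `n`). -/
theorem representable_of_two_sequences {X : Type*} [Fintype X] {K : ℕ}
    (p : X → Fin K → ℝ) (π : X ≃ Fin (Fintype.card X)) (η : X → ℝ)
    (β β' : ℕ → Fin K → ℝ)
    (h1 : ∀ x y : X, π y < π x →
      ∀ᶠ n in atTop, (∑ i, β n i * p y i) + η y < (∑ i, β n i * p x i) + η x)
    (h2 : ∀ x y : X, π y < π x →
      ∀ᶠ n in atTop, (∑ i, β' n i * p x i) + η x < (∑ i, β' n i * p y i) + η y) :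
    ∃ b : Fin K → ℝ, ∀ x y : X, π y < π x →
      (∑ i, b i * p y i) < (∑ i, b i * p x i) := by
  have hall : ∀ᶠ n in atTop, ∀ z : X × X, π z.2 < π z.1 →
      ((∑ i, β n i * p z.2 i) + η z.2 < (∑ i, β n i * p z.1 i) + η z.1) ∧
      ((∑ i, β' n i * p z.1 i) + η z.1 < (∑ i, β' n i * p z.2 i) + η z.2) := by
    rw [eventually_all]
    intro z
    rw [eventually_imp_distrib_left]
    intro h
    exact (h1 z.1 z.2 h).and (h2 z.1 z.2 h)
  obtain ⟨n, hn⟩ := hall.exists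
  refine ⟨fun i => β n i - β' n i, fun x y hxy => ?_⟩
  obtain ⟨ha, hb⟩ := hn (x, y) hxy
  have : ∀ w : X, (∑ i, (β n i - β' n i) * p w i)
      = (∑ i, β n i * p w i) - (∑ i, β' n i * p w i) := by
    intro w
    rw [← Finset.sum_sub_distrib]
    exact Finset.sum_congr rfl fun i _ => by ring
  rw [this x, this y]
  linarith
end
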